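/- arXiv:2404.03848 — 9 statements merged into one kernel-verified Lean document; each statement's English description precedes it below -/
import Mathlib

section
/- Let T be a Hausdorff topological group acting continuously on a compact Hausdorff space X, and let H be a subnormal co-compact closed subgroup of T. If a point x ∈ X is almost periodic for the action of T, then x is almost periodic for the restricted action of H. -/
open MulAction Pointwise

/-- A subset `A` of a topological group `G` is *syndetic* if `K⁻¹ * A = G`
for some compact set `K ⊆ G`. -/
def Syndetic {G : Type*} [Group G] [TopologicalSpace G] (A : Set G) : Prop :=
  ∃ K : Set G, IsCompact K ∧ K⁻¹ * A = Set.univ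

/-- A point `x` is *almost periodic* for the action of `G` if for every neighborhood `U`
of `x` the return-time set `{g | g • x ∈ U}` is syndetic in `G`. -/
def IsAlmostPeriodicPt (G : Type*) {X : Type*} [Group G] [TopologicalSpace G]
    [TopologicalSpace X] [MulAction G X] (x : X) : Prop :=
  ∀ U ∈ nhds x, Syndetic {g : G | g • x ∈ U}

/-- `H` is a *subnormal* subgroup of `T`: there is a finite chain
`H = H₀ ◁ H₁ ◁ ⋯ ◁ Hₙ = T` with each term normal in the next. -/
def Subgroup.IsSubnormalChain {T : Type*} [Group T] (H : Subgroup T) : Prop :=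
  ∃ (n : ℕ) (c : Fin (n + 1) → Subgroup T),
    c 0 = H ∧ c (Fin.last n) = ⊤ ∧
      ∀ i : Fin n, c i.castSucc ≤ c i.succ ∧ ((c i.castSucc).subgroupOf (c i.succ)).Normal


/-! If `x` is almost periodic for `G`, its orbit closure `Y` is a `G`-minimal set. Let `G` be closed,
normalize `N`, contain `N`, and suppose `T ⧸ N` is compact. Pick an `N`-minimal set `Z ⊆ Y`. The
translates `g • Z` (`g ∈ G`) are again `N`-minimal, and their union `G • Z` is closed, being the
projection of a closed subset of `(T ⧸ N) × X` along the compact factor. So `G • Z ⊇ Y ∋ x`, and `x`,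
lying in an `N`-minimal set, is `N`-almost periodic. Closures of the terms of a subnormal series
still normalize one another, and co-compactness passes to larger subgroups, so this step descends
the series. -/
/-- Minimal sets (nonempty, closed, invariant, with no proper such subset), characterised by the
density of every orbit in them. -/
def IsMinimalSet (G : Type*) {X : Type*} [Group G] [TopologicalSpace X] [MulAction G X]
    (Z : Set X) : Prop :=
  Z.Nonempty ∧ ∀ z ∈ Z, closure (orbit G z) = Z

section Dynamics

variable {G X : Type*} [Group G] [TopologicalSpace X] [MulAction G X]

theorem Syndetic.mono [TopologicalSpace G] {A B : Set G} (hA : Syndetic A) (hAB : A ⊆ B) :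
    Syndetic B := by
  obtain ⟨K, hK, hKA⟩ := hA
  exact ⟨K, hK, Set.eq_univ_of_univ_subset (hKA ▸ Set.mul_subset_mul_left hAB)⟩

theorem Syndetic.image {G' F : Type*} [Group G'] [TopologicalSpace G] [TopologicalSpace G']
    [FunLike F G G'] [MonoidHomClass F G G'] {f : F} (hf : Continuous f)
    (hsurj : Function.Surjective f) {A : Set G} (hA : Syndetic A) : Syndetic (f '' A) := by
  obtain ⟨K, hK, hKA⟩ := hA
  refine ⟨f '' K, hK.image hf, ?_⟩
  rw [← Set.image_inv, ← Set.image_mul, hKA, Set.image_univ_of_surjective hsurj]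

theorem IsAlmostPeriodicPt.of_surjective {G' F : Type*} [Group G'] [TopologicalSpace G]
    [TopologicalSpace G'] [MulAction G' X] [FunLike F G G'] [MonoidHomClass F G G'] {f : F}
    (hf : Continuous f) (hsurj : Function.Surjective f) (hsmul : ∀ (g : G) (y : X), f g • y = g • y)
    {x : X} (hx : IsAlmostPeriodicPt G x) : IsAlmostPeriodicPt G' x := fun U hU =>
  ((hx U hU).image hf hsurj).mono (by rintro - ⟨g, hg, rfl⟩; simpa [hsmul])

theorem closure_orbit_subset_of_mem [ContinuousConstSMul G X] {x y : X}
    (hy : y ∈ closure (orbit G x)) : closure (orbit G y) ⊆ closure (orbit G x) :=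
  closure_minimal (by
    rintro - ⟨g, rfl⟩
    exact smul_closure_orbit_subset g x (Set.smul_mem_smul_set hy)) isClosed_closure

theorem IsMinimalSet.isClosed {Z : Set X} (hZ : IsMinimalSet G Z) : IsClosed Z := by
  obtain ⟨z, hz⟩ := hZ.1
  exact hZ.2 z hz ▸ isClosed_closure

theorem IsMinimalSet.smul_subset {Z : Set X} (hZ : IsMinimalSet G Z) (g : G) : g • Z ⊆ Z := by
  rintro - ⟨z, hz, rfl⟩
  exact hZ.2 z hz ▸ subset_closure (mem_orbit z g)

theorem IsMinimalSet.isAlmostPeriodicPt [TopologicalSpace G] [CompactSpace X]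
    [ContinuousConstSMul G X] {Z : Set X} (hZ : IsMinimalSet G Z) {x : X} (hx : x ∈ Z) :
    IsAlmostPeriodicPt G x := by
  intro U hU
  obtain ⟨V, hVU, hVopen, hxV⟩ := mem_nhds_iff.1 hU
  -- every point of `Z` is moved into `V`, so finitely many translates of `V` cover `Z`
  have hcover : Z ⊆ ⋃ g : G, (g • ·) ⁻¹' V := fun y hy => by
    obtain ⟨-, hzV, g, rfl⟩ := mem_closure_iff.1 ((hZ.2 y hy).symm ▸ hx) V hVopen hxV
    exact Set.mem_iUnion.2 ⟨g, hzV⟩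
  obtain ⟨t, ht⟩ := hZ.isClosed.isCompact.elim_finite_subcover _
    (fun g => hVopen.preimage (continuous_const_smul g)) hcover
  refine ⟨t, t.finite_toSet.isCompact, Set.eq_univ_of_univ_subset fun g _ => ?_⟩
  obtain ⟨f, hft, hf⟩ := Set.mem_iUnion₂.1 (ht (hZ.smul_subset g (Set.smul_mem_smul_set hx)))
  exact ⟨f⁻¹, Set.inv_mem_inv.2 hft, f * g, hVU (by simpa [mul_smul] using hf), by group⟩

theorem IsAlmostPeriodicPt.mem_closure_orbit [TopologicalSpace G] [IsTopologicalGroup G]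
    [CompactSpace X] [T2Space X] [ContinuousSMul G X] {x y : X} (hx : IsAlmostPeriodicPt G x)
    (hy : y ∈ closure (orbit G x)) : x ∈ closure (orbit G y) := by
  refine mem_closure_iff.2 fun V hVopen hxV => ?_
  obtain ⟨U, hU, hUclosed, hUV⟩ := exists_mem_nhds_isClosed_subset (hVopen.mem_nhds hxV)
  obtain ⟨K, hK, hKA⟩ := hx U hU
  have horbit : orbit G x ⊆ K⁻¹ • U := by
    rintro - ⟨g, rfl⟩
    obtain ⟨k, hk, a, ha, rfl⟩ : g ∈ K⁻¹ * {g : G | g • x ∈ U} := hKA ▸ Set.mem_univ g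
    simpa only [mul_smul] using Set.smul_mem_smul hk (show a • x ∈ U from ha)
  obtain ⟨k, hk, u, hu, rfl⟩ :=
    (hK.inv.smul_set hUclosed.isCompact).isClosed.closure_subset_iff.2 horbit hy
  exact ⟨u, hUV hu, k⁻¹, inv_smul_smul k u⟩

theorem IsAlmostPeriodicPt.isMinimalSet_closure_orbit [TopologicalSpace G]
    [IsTopologicalGroup G] [CompactSpace X] [T2Space X] [ContinuousSMul G X] {x : X}
    (hx : IsAlmostPeriodicPt G x) : IsMinimalSet G (closure (orbit G x)) :=
  ⟨⟨x, subset_closure (mem_orbit_self x)⟩, fun _ hy => (closure_orbit_subset_of_mem hy).antisymm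
    (closure_orbit_subset_of_mem (hx.mem_closure_orbit hy))⟩

theorem exists_isMinimalSet_subset [CompactSpace X] [ContinuousConstSMul G X] {Y : Set X}
    (hY : IsClosed Y) (hYne : Y.Nonempty) (hYinv : ∀ g : G, g • Y ⊆ Y) :
    ∃ Z ⊆ Y, IsMinimalSet G Z := by
  set S : Set (Set X) := {Z | Z.Nonempty ∧ IsClosed Z ∧ ∀ g : G, g • Z ⊆ Z}
  have hchain : ∀ c ⊆ S, IsChain (· ⊆ ·) c → c.Nonempty → ∃ lb ∈ S, ∀ s ∈ c, lb ⊆ s := by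
    intro c hcS hc hcne
    have : Nonempty c := hcne.to_subtype
    refine ⟨⋂₀ c, ⟨?_, isClosed_sInter fun U hU => (hcS hU).2.1, ?_⟩,
      fun _ => Set.sInter_subset_of_mem⟩
    · exact IsCompact.nonempty_sInter_of_directed_nonempty_isCompact_isClosed
        (hc.symm.directedOn (r := fun a b : Set X => a ⊇ b)) (fun U hU => (hcS hU).1)
        (fun U hU => (hcS hU).2.1.isCompact) (fun U hU => (hcS hU).2.1)
    · rintro g - ⟨z, hz, rfl⟩
      exact Set.mem_sInter.2 fun U hU => (hcS hU).2.2 g ⟨z, hz U hU, rfl⟩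
  obtain ⟨Z, hZY, ⟨hZne, hZcl, hZinv⟩, hZmin⟩ :=
    zorn_superset_nonempty S hchain Y ⟨hYne, hY, hYinv⟩
  refine ⟨Z, hZY, hZne, fun z hz => ?_⟩
  have hsub : closure (orbit G z) ⊆ Z := closure_minimal
    (by rintro - ⟨g, rfl⟩; exact hZinv g (Set.smul_mem_smul_set hz)) hZcl
  exact hsub.antisymm (hZmin ⟨⟨z, subset_closure (mem_orbit_self z)⟩, isClosed_closure,
    fun g => smul_closure_orbit_subset g z⟩ hsub)

end Dynamics

section Normalizer

variable {T X : Type*} [Group T] [MulAction T X]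

theorem smul_orbit_of_mem_normalizer {N : Subgroup T} {g : T} (hg : g ∈ Subgroup.normalizer N)
    (z : X) :
    g • orbit N z = orbit N (g • z) := by
  ext y
  constructor
  · rintro ⟨-, ⟨n, rfl⟩, rfl⟩
    refine ⟨⟨g * n * g⁻¹, (Subgroup.mem_normalizer_iff.1 hg n).1 n.2⟩, ?_⟩
    simp [Subgroup.smul_def, mul_smul]
  · rintro ⟨n, rfl⟩
    refine ⟨(⟨g⁻¹ * n * g, (Subgroup.mem_normalizer_iff''.1 hg n).1 n.2⟩ : N) • z,
      mem_orbit z _, ?_⟩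
    simp [Subgroup.smul_def, mul_smul]

theorem IsMinimalSet.smul_of_mem_normalizer [TopologicalSpace X] [ContinuousConstSMul T X]
    {N : Subgroup T} {Z : Set X} (hZ : IsMinimalSet N Z) {g : T} (hg : g ∈ Subgroup.normalizer N) :
    IsMinimalSet N (g • Z) := by
  refine ⟨hZ.1.smul_set, ?_⟩
  rintro - ⟨z, hz, rfl⟩
  rw [← smul_orbit_of_mem_normalizer hg, closure_smul, hZ.2 z hz]

theorem isClosed_subgroup_smul [TopologicalSpace T] [IsTopologicalGroup T] [TopologicalSpace X]
    [ContinuousSMul T X] {N G : Subgroup T} (hNG : N ≤ G) (hG : IsClosed (G : Set T))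
    [CompactSpace (T ⧸ N)] {Z : Set X} (hZ : IsClosed Z) (hZinv : ∀ n : N, n • Z ⊆ Z) :
    IsClosed ((G : Set T) • Z) := by
  set F : Set (T × X) := {p | p.1 ∈ G ∧ p.1⁻¹ • p.2 ∈ Z}
  have hF : IsClosed F := (hG.preimage continuous_fst).inter
    (hZ.preimage (continuous_fst.inv.smul continuous_snd))
  let q : T × X → (T ⧸ N) × X := Prod.map QuotientGroup.mk id
  have hq : Topology.IsQuotientMap q :=
    ((QuotientGroup.isOpenMap_coe (N := N)).prodMap IsOpenMap.id).isQuotientMap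
      (continuous_quot_mk.prodMap continuous_id)
      (QuotientGroup.mk_surjective.prodMap Function.surjective_id)
  -- `F` is a union of fibres of `q` because `N ≤ G` and `Z` is `N`-invariant
  have hsat : q ⁻¹' (q '' F) = F := by
    refine (Set.subset_preimage_image q F).antisymm' ?_
    rintro ⟨t, y⟩ ⟨⟨s, y'⟩, ⟨hs, hsy⟩, he⟩
    obtain ⟨hst, rfl⟩ := Prod.mk.inj he
    have hn : s⁻¹ * t ∈ N := QuotientGroup.eq.1 hst
    refine ⟨by simpa using G.mul_mem hs (hNG hn), ?_⟩
    simpa [mul_smul] using hZinv ⟨_, N.inv_mem hn⟩ (Set.smul_mem_smul_set hsy)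
  have himage : (G : Set T) • Z = Prod.snd '' (q '' F) := by
    rw [Set.image_image]
    ext y
    constructor
    · rintro ⟨g, hg, z, hz, rfl⟩
      exact ⟨(g, g • z), ⟨hg, by simpa using hz⟩, rfl⟩
    · rintro ⟨⟨t, y⟩, ⟨ht, hy⟩, rfl⟩
      exact ⟨t, ht, t⁻¹ • y, hy, smul_inv_smul t y⟩
  rw [himage]
  exact isClosedMap_snd_of_compactSpace _ (hq.isClosed_preimage.1 (hsat.symm ▸ hF))

theorem IsAlmostPeriodicPt.of_le_of_le_normalizer [TopologicalSpace T] [IsTopologicalGroup T]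
    [TopologicalSpace X] [CompactSpace X] [T2Space X] [ContinuousSMul T X]
    {N G : Subgroup T} (hNG : N ≤ G) (hGN : G ≤ Subgroup.normalizer N) (hG : IsClosed (G : Set T))
    [CompactSpace (T ⧸ N)] {x : X} (hx : IsAlmostPeriodicPt G x) : IsAlmostPeriodicPt N x := by
  have hY := hx.isMinimalSet_closure_orbit
  obtain ⟨Z, hZY, hZ⟩ := exists_isMinimalSet_subset (G := N) hY.isClosed hY.1
    fun n => hY.smul_subset ⟨n, hNG n.2⟩
  obtain ⟨z, hz⟩ := hZ.1
  have hxGZ : x ∈ (G : Set T) • Z := by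
    refine closure_minimal ?_ (isClosed_subgroup_smul hNG hG hZ.isClosed hZ.smul_subset)
      ((hY.2 z (hZY hz)).symm ▸ subset_closure (mem_orbit_self x))
    rintro - ⟨g, rfl⟩
    exact Set.smul_mem_smul g.2 hz
  obtain ⟨g, hg, z', hz', rfl⟩ := hxGZ
  exact (hZ.smul_of_mem_normalizer (hGN hg)).isAlmostPeriodicPt (Set.smul_mem_smul_set hz')

end Normalizer

section Chain

variable {T : Type*} [Group T] [TopologicalSpace T]

theorem compactSpace_quotient_of_le {H K : Subgroup T} (h : H ≤ K) [CompactSpace (T ⧸ H)] :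
    CompactSpace (T ⧸ K) :=
  Function.Surjective.compactSpace (f := Subgroup.quotientMapOfLE h)
    (continuous_id.quotient_map' _) (QuotientGroup.mk_surjective.forall.2 fun t => ⟨t, rfl⟩)

variable [IsTopologicalGroup T]

theorem Subgroup.topologicalClosure_le_normalizer {A B : Subgroup T}
    (h : A ≤ Subgroup.normalizer B) :
    A.topologicalClosure ≤ Subgroup.normalizer B.topologicalClosure := by
  have hconj : ∀ g ∈ A.topologicalClosure, ∀ m ∈ B.topologicalClosure,
      g * m * g⁻¹ ∈ B.topologicalClosure := fun g hg m hm =>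
    map_mem_closure₂ (f := fun g m => g * m * g⁻¹) (by fun_prop) hg hm fun g hg m hm =>
      (Subgroup.mem_normalizer_iff.1 (h hg) m).1 hm
  refine fun g hg => Subgroup.mem_normalizer_iff.2 fun m => ⟨hconj g hg m, fun hm => ?_⟩
  simpa [mul_assoc] using hconj g⁻¹ (inv_mem hg) _ hm

theorem IsAlmostPeriodicPt.of_closed_chain {X : Type*} [TopologicalSpace X] [CompactSpace X]
    [T2Space X] [MulAction T X] [ContinuousSMul T X] {n : ℕ} {K : Fin (n + 1) → Subgroup T}
    (hclosed : ∀ i, IsClosed (K i : Set T)) (hle : ∀ i : Fin n, K i.castSucc ≤ K i.succ)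
    (hnormal : ∀ i : Fin n, K i.succ ≤ Subgroup.normalizer (K i.castSucc))
    [CompactSpace (T ⧸ K 0)] {x : X} (hx : IsAlmostPeriodicPt (K (Fin.last n)) x) :
    IsAlmostPeriodicPt (K 0) x := by
  have hmono : Monotone K := Fin.monotone_iff_le_succ.2 hle
  suffices ∀ i, IsAlmostPeriodicPt (K i) x from this 0
  intro i
  induction i using Fin.reverseInduction with
  | last => exact hx
  | cast i ih =>
    have := compactSpace_quotient_of_le (hmono (Fin.zero_le i.castSucc))
    exact ih.of_le_of_le_normalizer (hle i) (hnormal i) (hclosed _)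

end Chain

theorem almostPeriodic_of_subnormal_cocompact_general
    {T X : Type*} [Group T] [TopologicalSpace T] [IsTopologicalGroup T]
    [TopologicalSpace X] [CompactSpace X] [T2Space X] [MulAction T X] [ContinuousSMul T X]
    (H : Subgroup T) (hHclosed : IsClosed (H : Set T))
    (hcc : CompactSpace (T ⧸ H)) (hsub : H.IsSubnormalChain)
    (x : X) (hx : IsAlmostPeriodicPt T x) :
    IsAlmostPeriodicPt H x := by
  obtain ⟨n, c, hc0, hclast, hc⟩ := hsub
  have hK0 : (c 0).topologicalClosure = H :=
    hc0 ▸ (H.topologicalClosure_minimal le_rfl hHclosed).antisymm H.le_topologicalClosure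
  have hKlast : (c (Fin.last n)).topologicalClosure = ⊤ := by
    rw [hclast]
    exact top_unique (Subgroup.le_topologicalClosure _)
  have : CompactSpace (T ⧸ (c 0).topologicalClosure) := hK0 ▸ hcc
  have htop : IsAlmostPeriodicPt (c (Fin.last n)).topologicalClosure x := hKlast ▸
    hx.of_surjective (f := Subgroup.topEquiv.symm) (continuous_id.subtype_mk _)
      Subgroup.topEquiv.symm.surjective fun _ _ => rfl
  exact hK0 ▸ IsAlmostPeriodicPt.of_closed_chain (K := fun i => (c i).topologicalClosure)
    (fun i => Subgroup.isClosed_topologicalClosure _)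
    (fun i => Subgroup.topologicalClosure_mono (hc i).1)
    (fun i => Subgroup.topologicalClosure_le_normalizer
      ((Subgroup.normal_subgroupOf_iff_le_normalizer (hc i).1).1 (hc i).2)) htop

/-- If `H` is a subnormal co-compact closed subgroup of a Hausdorff topological group `T`
acting continuously on a compact Hausdorff space `X`, and `x` is almost periodic for `T`,
then `x` is almost periodic for the restricted action of `H`. -/
theorem almostPeriodic_of_subnormal_cocompact
    {T X : Type*} [Group T] [TopologicalSpace T] [IsTopologicalGroup T] [T2Space T]
    [TopologicalSpace X] [CompactSpace X] [T2Space X] [MulAction T X] [ContinuousSMul T X]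
    (H : Subgroup T) (hHclosed : IsClosed (H : Set T))
    (hcc : CompactSpace (T ⧸ H)) (hsub : H.IsSubnormalChain)
    (x : X) (hx : IsAlmostPeriodicPt T x) :
    IsAlmostPeriodicPt H x :=
  almostPeriodic_of_subnormal_cocompact_general H hHclosed hcc hsub x hx
end

section
/- Let T be a Hausdorff topological group acting continuously on a compact Hausdorff space X, and let H be a co-compact closed subgroup of T. If a point x ∈ X is almost periodic for the restricted action of H, then x is almost periodic for the action of T. -/
/-!
Let `Y` be the closure of the `H`-orbit of `x`. Since `x` is `H`-almost periodic, `x` lies in the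
`H`-orbit closure of every point of `Y`. Because `T ⧸ H` is compact, the union `T • Y` of the
translates of `Y` is closed: it is the projection to `X` of a closed subset of `(T ⧸ H) × X`.
Hence every point `z` of the `T`-orbit closure of `x` lies in some `t • Y`, and `x` lies in the
`H`-orbit closure of `t⁻¹ • z`, so in the `T`-orbit closure of `z`. In a compact space this
minimality of the orbit closure forces `x` to be almost periodic, by a finite subcover argument.
-/

open MulAction Pointwise

open Set

theorem IsAlmostPeriodicPt.mem_closure_orbit_of_mem_closure_orbit {G X : Type*} [Group G]
    [TopologicalSpace G] [TopologicalSpace X] [CompactSpace X] [T2Space X] [MulAction G X]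
    [ContinuousSMul G X] {x y : X} (hx : IsAlmostPeriodicPt G x)
    (hy : y ∈ closure (orbit G x)) :
    x ∈ closure (orbit G y) := by
  rw [mem_closure_iff_nhds]
  intro U hU
  obtain ⟨V, hV, hVclosed, hVU⟩ := exists_mem_nhds_isClosed_subset hU
  obtain ⟨K, hKcomp, hK⟩ := hx V hV
  set B : Set X := Prod.snd '' (K ×ˢ univ ∩ (fun p : G × X => p.1 • p.2) ⁻¹' V)
  have hB : IsClosed B :=
    ((hKcomp.prod isCompact_univ).inter_right
      (hVclosed.preimage continuous_smul)).image continuous_snd |>.isClosed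
  have horbit : orbit G x ⊆ B := by
    rintro _ ⟨g, rfl⟩
    obtain ⟨k, hk, a, ha, rfl⟩ : g ∈ K⁻¹ * {a : G | a • x ∈ V} := hK ▸ mem_univ g
    refine ⟨(k⁻¹, (k * a) • x), ⟨⟨hk, trivial⟩, ?_⟩, rfl⟩
    simpa [smul_smul] using ha
  obtain ⟨⟨k, z⟩, ⟨⟨-, -⟩, hkz⟩, rfl⟩ := hB.closure_subset_iff.2 horbit hy
  exact ⟨k • z, hVU hkz, mem_orbit z k⟩

theorem isAlmostPeriodicPt_of_forall_mem_closure_orbit {G X : Type*} [Group G]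
    [TopologicalSpace G] [TopologicalSpace X] [CompactSpace X] [MulAction G X]
    [ContinuousConstSMul G X] {x : X} (h : ∀ z ∈ closure (orbit G x), x ∈ closure (orbit G z)) :
    IsAlmostPeriodicPt G x := by
  intro U hU
  have hcover : closure (orbit G x) ⊆ ⋃ g : G, (g • ·) ⁻¹' interior U := by
    intro z hz
    obtain ⟨_, hw, g, rfl⟩ := mem_closure_iff_nhds.mp (h z hz) _ (interior_mem_nhds.mpr hU)
    exact mem_iUnion.mpr ⟨g, hw⟩
  obtain ⟨s, hs⟩ := isClosed_closure.isCompact.elim_finite_subcover _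
    (fun g => isOpen_interior.preimage (continuous_const_smul g)) hcover
  refine ⟨s, s.finite_toSet.isCompact, eq_univ_of_forall fun g => ?_⟩
  obtain ⟨f, hf, hfg⟩ := mem_iUnion₂.mp (hs (subset_closure (mem_orbit x g)))
  refine ⟨f⁻¹, inv_mem_inv.mpr hf, f * g, ?_, inv_mul_cancel_left f g⟩
  show (f * g) • x ∈ U
  exact mul_smul f g x ▸ interior_subset hfg

theorem isClosed_iUnion_smul_of_compactSpace_quotient {T X : Type*} [Group T]
    [TopologicalSpace T] [IsTopologicalGroup T] [TopologicalSpace X] [MulAction T X]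
    [ContinuousSMul T X] (H : Subgroup T) [CompactSpace (T ⧸ H)] {Y : Set X}
    (hY : IsClosed Y) (hHY : ∀ h : H, h • Y ⊆ Y) :
    IsClosed (⋃ t : T, t • Y) := by
  set q : T × X → (T ⧸ H) × X := Prod.map QuotientGroup.mk id
  have hq : Topology.IsQuotientMap q :=
    (QuotientGroup.isOpenQuotientMap_mk.prodMap IsOpenQuotientMap.id).isQuotientMap
  set W : Set (T × X) := {p | p.1⁻¹ • p.2 ∈ Y}
  have hsat : q ⁻¹' (q '' W) = W := by
    refine (subset_preimage_image q W).antisymm' ?_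
    rintro ⟨t, z⟩ ⟨⟨t', z'⟩, hW', heq⟩
    obtain ⟨htt', rfl : z' = z⟩ := Prod.ext_iff.mp heq
    have hmem : t⁻¹ * t' ∈ H := by simpa using H.inv_mem (QuotientGroup.eq.mp htt')
    have := hHY ⟨_, hmem⟩ (smul_mem_smul_set hW')
    show t⁻¹ • _ ∈ Y
    simpa [Subgroup.smul_def, smul_smul] using this
  have hF : IsClosed (q '' W) := by
    rw [← hq.isClosed_preimage, hsat]
    exact hY.preimage (continuous_fst.inv.smul continuous_snd)
  have hunion : ⋃ t : T, t • Y = Prod.snd '' (q '' W) := by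
    ext z
    simp [image_image, mem_smul_set_iff_inv_smul_mem, W, q]
  rw [hunion]
  exact isClosedMap_snd_of_compactSpace _ hF

theorem almostPeriodic_of_cocompact_subgroup_almostPeriodic_general
    {T X : Type*} [Group T] [TopologicalSpace T] [IsTopologicalGroup T]
    [TopologicalSpace X] [CompactSpace X] [T2Space X] [MulAction T X] [ContinuousSMul T X]
    (H : Subgroup T) (hcc : CompactSpace (T ⧸ H))
    (x : X) (hx : IsAlmostPeriodicPt H x) :
    IsAlmostPeriodicPt T x := by
  set Y := closure (orbit H x)
  have hclosed : IsClosed (⋃ t : T, t • Y) :=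
    isClosed_iUnion_smul_of_compactSpace_quotient H isClosed_closure
      fun h => smul_closure_orbit_subset h x
  have horbit : closure (orbit T x) ⊆ ⋃ t : T, t • Y := by
    refine hclosed.closure_subset_iff.2 ?_
    rintro _ ⟨t, rfl⟩
    exact mem_iUnion.2 ⟨t, smul_mem_smul_set (subset_closure (mem_orbit_self x))⟩
  refine isAlmostPeriodicPt_of_forall_mem_closure_orbit fun z hz => ?_
  obtain ⟨t, hzt⟩ := mem_iUnion.1 (horbit hz)
  have hxz := hx.mem_closure_orbit_of_mem_closure_orbit (mem_smul_set_iff_inv_smul_mem.1 hzt)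
  exact closure_mono ((orbit_subgroup_subset H _).trans (orbit_smul t⁻¹ z).subset) hxz

/-- If `H` is a co-compact closed subgroup of a Hausdorff topological group `T`
acting continuously on a compact Hausdorff space `X`, and `x` is almost periodic for the
restricted action of `H`, then `x` is almost periodic for `T`. -/
theorem almostPeriodic_of_cocompact_subgroup_almostPeriodic
    {T X : Type*} [Group T] [TopologicalSpace T] [IsTopologicalGroup T] [T2Space T]
    [TopologicalSpace X] [CompactSpace X] [T2Space X] [MulAction T X] [ContinuousSMul T X]
    (H : Subgroup T) (hHclosed : IsClosed (H : Set T)) (hcc : CompactSpace (T ⧸ H))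
    (x : X) (hx : IsAlmostPeriodicPt H x) :
    IsAlmostPeriodicPt T x :=
  almostPeriodic_of_cocompact_subgroup_almostPeriodic_general H hcc x hx
end

section
/- Let T be a Hausdorff topological group acting continuously and minimally on a compact Hausdorff space X. Let H be a closed subgroup of T admitting a subnormal chain H = H₀ ◁ H₁ ◁ ⋯ ◁ Hₙ = T in which H₀ is co-compact in T and the index [H_{i+1} : H_i] is finite for all 1 ≤ i < n. Then the orbit-closure map 𝒪_H : X → 2^X, x ↦ cl(H·x), is continuous with respect to the Vietoris topology on 2^X. -/
open MulAction Pointwise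

/-- The *Vietoris topology* on the hyperspace `2^X` of nonempty closed subsets of `X`,
generated by the sets `{A | A ⊆ U}` and `{A | A ∩ U ≠ ∅}` for `U` open in `X`. -/
def VietorisTopology (X : Type*) [TopologicalSpace X] :
    TopologicalSpace {A : Set X // A.Nonempty ∧ IsClosed A} :=
  TopologicalSpace.generateFrom
    ({s | ∃ U : Set X, IsOpen U ∧ s = {A : {A : Set X // A.Nonempty ∧ IsClosed A} | ↑A ⊆ U}} ∪
     {s | ∃ U : Set X, IsOpen U ∧
        s = {A : {A : Set X // A.Nonempty ∧ IsClosed A} | ((A : Set X) ∩ U).Nonempty}})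

/-!
Call a subgroup `G` good (`OpenMinimalOrbitClosures X G`) if every `G`-orbit closure is an open
minimal `G`-invariant set. `T` is good by minimality, and goodness passes to a normal subgroup
`G ◁ K` of finite index: the finitely many `K`-translates of a `G`-minimal set cover the open
`K`-minimal set containing it and are pairwise disjoint or equal, hence open. So `G = c 1` is good,
and it normalizes `H`.

The map `x ↦ cl(H x)` is always lower semicontinuous. For upper semicontinuity at `x`, let
`C = cl(G x)`, which is open, and `K = cl G`, which still normalizes the closed subgroup `H`. For an
`H`-minimal `M ⊆ C`, the `H`-orbit closures in `C` are the translates `k • M`, `k ∈ K`, and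
co-compactness of `H` makes `K • (M × M)` closed. Its sections over `C` are the `H`-orbit closures,
and a closed relation into a compact space has upper semicontinuous sections.
-/

open Set Topology

section PointSetTopology

variable {X Y : Type*} [TopologicalSpace X] [TopologicalSpace Y]

theorem isOpen_of_mem_of_finite_pairwiseDisjoint {𝒜 : Set (Set X)} (hfin : 𝒜.Finite)
    (hclosed : ∀ A ∈ 𝒜, IsClosed A) (hdisj : 𝒜.PairwiseDisjoint id) (hopen : IsOpen (⋃₀ 𝒜))
    {A : Set X} (hA : A ∈ 𝒜) : IsOpen A := by
  have hA_eq : A = ⋃₀ 𝒜 ∩ (⋃ B ∈ 𝒜 \ {A}, B)ᶜ := by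
    refine Subset.antisymm (fun x hx => ⟨⟨A, hA, hx⟩, ?_⟩) ?_
    · simp only [mem_compl_iff, mem_iUnion₂, not_exists]
      exact fun B hB hxB => disjoint_left.mp (hdisj hB.1 hA hB.2) hxB hx
    · rintro x ⟨⟨B, hB, hxB⟩, hx⟩
      by_contra hxA
      exact hx (mem_biUnion ⟨hB, by rintro rfl; exact hxA hxB⟩ hxB)
  rw [hA_eq]
  exact hopen.inter (hfin.sdiff.isClosed_biUnion fun B hB => hclosed B hB.1).isOpen_compl

theorem IsClosed.isOpen_setOf_preimage_mk_subset [CompactSpace Y] {D : Set (X × Y)}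
    (hD : IsClosed D) {U : Set Y} (hU : IsOpen U) : IsOpen {x | Prod.mk x ⁻¹' D ⊆ U} := by
  have hcompl : {x | Prod.mk x ⁻¹' D ⊆ U} = (Prod.fst '' (D ∩ univ ×ˢ Uᶜ))ᶜ := by
    ext x
    simp [subset_def]
  rw [hcompl]
  exact (isClosedMap_fst_of_compactSpace _
    (hD.inter (isClosed_univ.prod hU.isClosed_compl))).isOpen_compl

end PointSetTopology

theorem mk_mem_smul_prod_self_iff {α β : Type*} [SMul α β] {K : Set α} {M : Set β} {x y : β} :
    (x, y) ∈ K • (M ×ˢ M) ↔ ∃ k ∈ K, x ∈ k • M ∧ y ∈ k • M := by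
  simp only [← iUnion_smul_set, smul_set_prod, mem_iUnion, mem_prod, exists_prop]

section Cocompact

variable {T X : Type*} [Group T] [TopologicalSpace T] [IsTopologicalGroup T] [TopologicalSpace X]

theorem isClosed_image_snd_of_compactSpace_quotient {H : Subgroup T} [CompactSpace (T ⧸ H)]
    {E : Set (T × X)} (hE : IsClosed E) (hsat : ∀ p ∈ E, ∀ h ∈ H, (p.1 * h, p.2) ∈ E) :
    IsClosed (Prod.snd '' E) := by
  -- `E` descends to a closed subset of `(T ⧸ H) × X`, whose projection along the compact factor
  -- is closed.
  let q : T × X → (T ⧸ H) × X := Prod.map (↑) id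
  have hq : IsOpenQuotientMap q :=
    QuotientGroup.isOpenQuotientMap_mk.prodMap IsOpenQuotientMap.id
  have hsaturated : q ⁻¹' (q '' E) = E := by
    refine (subset_preimage_image q E).antisymm' ?_
    rintro ⟨t, x⟩ ⟨⟨s, y⟩, hsy, he⟩
    simp only [q, Prod.map, id, Prod.mk.injEq] at he
    obtain ⟨hst, rfl⟩ := he
    simpa using hsat _ hsy _ (QuotientGroup.eq.mp hst)
  have hqE : IsClosed (q '' E) := hq.isQuotientMap.isClosed_preimage.mp (by rwa [hsaturated])
  have hsnd : Prod.snd '' (q '' E) = Prod.snd '' E := by rw [image_image]; rfl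
  rw [← hsnd]
  exact isClosedMap_snd_of_compactSpace _ hqE

theorem isClosed_smul_of_compactSpace_quotient [MulAction T X] [ContinuousSMul T X]
    {H K : Subgroup T} [CompactSpace (T ⧸ H)] (hK : IsClosed (K : Set T)) (hHK : H ≤ K)
    {M : Set X} (hM : IsClosed M) (hHM : ∀ h ∈ H, ∀ x ∈ M, h • x ∈ M) :
    IsClosed ((K : Set T) • M) := by
  have hE : IsClosed {p : T × X | p.1 ∈ K ∧ p.1⁻¹ • p.2 ∈ M} :=
    (hK.preimage continuous_fst).inter (hM.preimage (continuous_fst.inv.smul continuous_snd))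
  have himage : Prod.snd '' {p : T × X | p.1 ∈ K ∧ p.1⁻¹ • p.2 ∈ M} = (K : Set T) • M := by
    ext x
    constructor
    · rintro ⟨⟨k, x⟩, ⟨hk, hx⟩, rfl⟩
      exact ⟨k, hk, k⁻¹ • x, hx, smul_inv_smul k x⟩
    · rintro ⟨k, hk, m, hm, rfl⟩
      exact ⟨(k, k • m), ⟨hk, by simpa using hm⟩, rfl⟩
  rw [← himage]
  refine isClosed_image_snd_of_compactSpace_quotient (H := H) hE ?_
  rintro ⟨t, x⟩ ⟨ht, hx⟩ h hh
  refine ⟨K.mul_mem ht (hHK hh), ?_⟩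
  simpa [mul_smul] using hHM _ (H.inv_mem hh) _ hx

theorem Subgroup.topologicalClosure_le_normalizer_s4 {H G : Subgroup T} (hH : IsClosed (H : Set T))
    (hG : G ≤ Subgroup.normalizer H) : G.topologicalClosure ≤ Subgroup.normalizer H := by
  have hclosed : IsClosed {g : T | ∀ h ∈ H, g * h * g⁻¹ ∈ H} := by
    simp only [ofPred_forall]
    exact isClosed_iInter fun h => isClosed_iInter fun _ => hH.preimage (by fun_prop)
  have hconj : ∀ k ∈ G.topologicalClosure, ∀ h ∈ H, k * h * k⁻¹ ∈ H := by
    intro k hk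
    rw [← SetLike.mem_coe, Subgroup.topologicalClosure_coe] at hk
    exact closure_minimal (fun g hg h => (Subgroup.mem_normalizer_iff.mp (hG hg) h).mp) hclosed hk
  intro k hk
  refine Subgroup.mem_normalizer_iff.mpr fun h => ⟨hconj k hk h, fun hkh => ?_⟩
  simpa [mul_assoc] using hconj k⁻¹ (inv_mem hk) _ hkh

end Cocompact

section Subflow

variable {T X : Type*} [Group T] [MulAction T X] [TopologicalSpace X]

structure IsSubflow (G : Subgroup T) (S : Set X) : Prop where
  nonempty : S.Nonempty
  isClosed : IsClosed S
  smul_mem : ∀ g ∈ G, ∀ x ∈ S, g • x ∈ S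

variable {G K : Subgroup T} {S M C : Set X}

theorem IsSubflow.mono (hS : IsSubflow K S) (hGK : G ≤ K) : IsSubflow G S :=
  ⟨hS.nonempty, hS.isClosed, fun g hg => hS.smul_mem g (hGK hg)⟩

theorem IsSubflow.closure_orbit_subset (hS : IsSubflow G S) {x : X} (hx : x ∈ S) :
    closure (orbit G x) ⊆ S :=
  closure_minimal (by rintro _ ⟨g, rfl⟩; exact hS.smul_mem g g.2 x hx) hS.isClosed

theorem IsSubflow.exists_minimal_subset [CompactSpace X] (hS : IsSubflow G S) :
    ∃ M ⊆ S, Minimal (IsSubflow G) M := by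
  refine zorn_superset_nonempty {S | IsSubflow G S} (fun c hc hchain hne => ?_) S hS
  have : Nonempty c := hne.to_subtype
  have hdir : DirectedOn (· ⊇ ·) c := fun A hA B hB =>
    (hchain.total hA hB).elim (fun h => ⟨A, hA, subset_rfl, h⟩) (fun h => ⟨B, hB, h, subset_rfl⟩)
  refine ⟨⋂₀ c, ⟨?_, isClosed_sInter fun A hA => (hc hA).isClosed, ?_⟩,
    fun A hA => sInter_subset_of_mem hA⟩
  · exact IsCompact.nonempty_sInter_of_directed_nonempty_isCompact_isClosed hdir
      (fun A hA => (hc hA).nonempty) (fun A hA => (hc hA).isClosed.isCompact)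
      (fun A hA => (hc hA).isClosed)
  · exact fun g hg x hx => mem_sInter.mpr fun A hA => (hc hA).smul_mem g hg x (hx A hA)

theorem Minimal.mono_subgroup (hC : Minimal (IsSubflow G) C) (hGK : G ≤ K) (hK : IsSubflow K C) :
    Minimal (IsSubflow K) C :=
  ⟨hK, fun _ hS hSC => hC.2 (hS.mono hGK) hSC⟩

theorem Minimal.smul_set_eq (hC : Minimal (IsSubflow K) C) (hMC : M ⊆ C) (hM : M.Nonempty)
    (hclosed : IsClosed ((K : Set T) • M)) : (K : Set T) • M = C := by
  refine hC.eq_of_subset ⟨(OneMemClass.coe_nonempty K).smul hM, hclosed, ?_⟩ ?_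
  · rintro g hg _ ⟨k, hk, m, hm, rfl⟩
    exact ⟨g * k, K.mul_mem hg hk, m, hm, mul_smul _ _ _⟩
  · exact smul_subset_iff.mpr fun k hk m hm => hC.prop.smul_mem k hk m (hMC hm)

variable (X) in
def OpenMinimalOrbitClosures (G : Subgroup T) : Prop :=
  ∀ x : X, Minimal (IsSubflow G) (closure (orbit G x)) ∧ IsOpen (closure (orbit G x))

theorem openMinimalOrbitClosures_top (hmin : ∀ x : X, Dense (orbit T x)) :
    OpenMinimalOrbitClosures X (⊤ : Subgroup T) := by
  have huniv (x : X) : closure (orbit (⊤ : Subgroup T) x) = univ := by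
    have horbit : orbit (⊤ : Subgroup T) x = orbit T x := by
      ext y
      simp [mem_orbit_iff]
    rw [horbit, (hmin x).closure_eq]
  intro x
  rw [huniv]
  refine ⟨⟨⟨⟨x, trivial⟩, isClosed_univ, fun _ _ _ _ => trivial⟩, fun S hS _ => ?_⟩, isOpen_univ⟩
  obtain ⟨y, hy⟩ := hS.nonempty
  rw [← huniv y]
  exact hS.closure_orbit_subset hy

variable [ContinuousConstSMul T X]

theorem isSubflow_closure_orbit (G : Subgroup T) (x : X) :
    IsSubflow G (closure (orbit G x)) := by
  refine ⟨⟨x, subset_closure (mem_orbit_self x)⟩, isClosed_closure, fun g hg y hy => ?_⟩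
  have hmaps : MapsTo (g • ·) (orbit G x) (orbit G x) := by
    rintro _ ⟨g', rfl⟩
    exact ⟨⟨g, hg⟩ * g', mul_smul _ _ _⟩
  exact hmaps.closure (continuous_const_smul g) hy

theorem IsSubflow.smul (hS : IsSubflow G S) {k : T} (hk : k ∈ Subgroup.normalizer G) :
    IsSubflow G (k • S) := by
  refine ⟨hS.nonempty.smul_set, hS.isClosed.smul k, ?_⟩
  rintro g hg _ ⟨x, hx, rfl⟩
  have hconj : k⁻¹ * g * k ∈ G := (Subgroup.mem_normalizer_iff''.mp hk g).mp hg
  refine ⟨(k⁻¹ * g * k) • x, hS.smul_mem _ hconj x hx, ?_⟩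
  simp [smul_smul, mul_assoc]

theorem Minimal.closure_orbit_eq (hM : Minimal (IsSubflow G) M) {x : X} (hx : x ∈ M) :
    closure (orbit G x) = M :=
  hM.eq_of_subset (isSubflow_closure_orbit G x) (hM.prop.closure_orbit_subset hx)

theorem Minimal.eq_of_inter_nonempty {M₁ M₂ : Set X} (h₁ : Minimal (IsSubflow G) M₁)
    (h₂ : Minimal (IsSubflow G) M₂) (h : (M₁ ∩ M₂).Nonempty) : M₁ = M₂ := by
  obtain ⟨x, hx₁, hx₂⟩ := h
  rw [← h₁.closure_orbit_eq hx₁, h₂.closure_orbit_eq hx₂]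

theorem pairwiseDisjoint_of_forall_minimal {𝒜 : Set (Set X)}
    (h𝒜 : ∀ A ∈ 𝒜, Minimal (IsSubflow G) A) : 𝒜.PairwiseDisjoint id :=
  fun A hA B hB hAB => disjoint_iff_inter_eq_empty.mpr <| not_nonempty_iff_eq_empty.mp
    fun h => hAB ((h𝒜 A hA).eq_of_inter_nonempty (h𝒜 B hB) h)

theorem Minimal.smul (hM : Minimal (IsSubflow G) M) {k : T} (hk : k ∈ Subgroup.normalizer G) :
    Minimal (IsSubflow G) (k • M) := by
  refine ⟨hM.prop.smul hk, fun S hS hSM => ?_⟩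
  have hkS : k⁻¹ • S = M :=
    hM.eq_of_subset (hS.smul (inv_mem hk)) (subset_smul_set_iff.mp hSM)
  rw [← hkS, smul_inv_smul]

theorem Minimal.smul_eq_of_mem (hM : Minimal (IsSubflow G) M) {g : T} (hg : g ∈ G) :
    g • M = M :=
  hM.eq_of_subset (hM.prop.smul (Subgroup.le_normalizer hg))
    (smul_set_subset_iff.mpr fun x hx => hM.prop.smul_mem g hg x hx)

end Subflow

section OrbitClosures

variable {T X : Type*} [Group T] [TopologicalSpace X] [MulAction T X] [ContinuousConstSMul T X]

theorem isOpen_setOf_closure_orbit_inter_nonempty (G : Subgroup T) {U : Set X} (hU : IsOpen U) :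
    IsOpen {x : X | (closure (orbit G x) ∩ U).Nonempty} := by
  have hunion : {x : X | (closure (orbit G x) ∩ U).Nonempty} = ⋃ g : G, ((g : T) • ·) ⁻¹' U := by
    ext x
    simp only [mem_ofPred_eq, closure_inter_open_nonempty_iff hU, mem_iUnion, mem_preimage]
    exact ⟨fun ⟨_, ⟨g, rfl⟩, hU⟩ => ⟨g, hU⟩, fun ⟨g, hg⟩ => ⟨g • x, mem_orbit x g, hg⟩⟩
  rw [hunion]
  exact isOpen_iUnion fun g => hU.preimage (continuous_const_smul (g : T))

theorem Minimal.finite_image_smul_of_finiteIndex {G K : Subgroup T} {M : Set X}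
    (hM : Minimal (IsSubflow G) M) [(G.subgroupOf K).FiniteIndex] :
    ((· • M) '' (K : Set T)).Finite := by
  refine (finite_range fun q : K ⧸ G.subgroupOf K => (q.out : T) • M).subset ?_
  rintro _ ⟨k, hk, rfl⟩
  obtain ⟨g, hg⟩ := QuotientGroup.mk_out_eq_mul (G.subgroupOf K) ⟨k, hk⟩
  refine ⟨QuotientGroup.mk ⟨k, hk⟩, ?_⟩
  dsimp only
  rw [hg, Subgroup.coe_mul, mul_smul, hM.smul_eq_of_mem (Subgroup.mem_subgroupOf.mp g.2)]

theorem OpenMinimalOrbitClosures.of_finiteIndex [CompactSpace X] {G K : Subgroup T}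
    (hK : OpenMinimalOrbitClosures X K) (hGK : G ≤ K) (hKG : K ≤ Subgroup.normalizer G)
    [(G.subgroupOf K).FiniteIndex] : OpenMinimalOrbitClosures X G := by
  intro x
  obtain ⟨hC, hCopen⟩ := hK x
  obtain ⟨M, hMC, hM⟩ := (hC.prop.mono hGK).exists_minimal_subset
  set 𝒜 := (· • M) '' (K : Set T)
  have h𝒜 : ∀ A ∈ 𝒜, Minimal (IsSubflow G) A := by
    rintro _ ⟨k, hk, rfl⟩
    exact hM.smul (hKG hk)
  have hfin : 𝒜.Finite := hM.finite_image_smul_of_finiteIndex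
  have hunion : ⋃₀ 𝒜 = (K : Set T) • M := by rw [sUnion_image, iUnion_smul_set]
  have hcover : ⋃₀ 𝒜 = closure (orbit K x) := by
    rw [hunion]
    refine hC.smul_set_eq hMC hM.prop.nonempty ?_
    rw [← hunion, sUnion_eq_biUnion]
    exact hfin.isClosed_biUnion fun A hA => (h𝒜 A hA).prop.isClosed
  obtain ⟨A, hA, hxA⟩ : x ∈ ⋃₀ 𝒜 := hcover ▸ subset_closure (mem_orbit_self x)
  rw [(h𝒜 A hA).closure_orbit_eq hxA]
  exact ⟨h𝒜 A hA, isOpen_of_mem_of_finite_pairwiseDisjoint hfin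
    (fun B hB => (h𝒜 B hB).prop.isClosed) (pairwiseDisjoint_of_forall_minimal h𝒜)
    (hcover ▸ hCopen) hA⟩

end OrbitClosures

section UpperSemicontinuity

variable {T X : Type*} [Group T] [TopologicalSpace T] [IsTopologicalGroup T] [TopologicalSpace X]
  [MulAction T X] [ContinuousSMul T X]

theorem IsSubflow.topologicalClosure {G : Subgroup T} {S : Set X} (hS : IsSubflow G S) :
    IsSubflow G.topologicalClosure S := by
  have hclosed : IsClosed {g : T | ∀ x ∈ S, g • x ∈ S} := by
    simp only [ofPred_forall]
    exact isClosed_iInter fun x => isClosed_iInter fun _ =>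
      hS.isClosed.preimage (continuous_id.smul continuous_const)
  refine ⟨hS.nonempty, hS.isClosed, fun g hg => ?_⟩
  rw [← SetLike.mem_coe, Subgroup.topologicalClosure_coe] at hg
  exact closure_minimal hS.smul_mem hclosed hg

theorem Minimal.exists_isClosed_preimage_mk_eq_closure_orbit [CompactSpace X]
    {H G : Subgroup T} [CompactSpace (T ⧸ H)] (hH : IsClosed (H : Set T)) (hHG : H ≤ G)
    (hGH : G ≤ Subgroup.normalizer H) {C : Set X} (hC : Minimal (IsSubflow G) C) :
    ∃ D : Set (X × X), IsClosed D ∧ ∀ x ∈ C, Prod.mk x ⁻¹' D = closure (orbit H x) := by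
  set K := G.topologicalClosure
  have hHK : H ≤ K := hHG.trans G.le_topologicalClosure
  have hKH : K ≤ Subgroup.normalizer H := Subgroup.topologicalClosure_le_normalizer_s4 hH hGH
  obtain ⟨M, hMC, hM⟩ := (hC.prop.mono hHG).exists_minimal_subset
  have hKM : (K : Set T) • M = C :=
    (hC.mono_subgroup G.le_topologicalClosure hC.prop.topologicalClosure).smul_set_eq hMC
      hM.prop.nonempty (isClosed_smul_of_compactSpace_quotient G.isClosed_topologicalClosure
        hHK hM.prop.isClosed hM.prop.smul_mem)
  refine ⟨(K : Set T) • (M ×ˢ M), isClosed_smul_of_compactSpace_quotient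
    G.isClosed_topologicalClosure hHK (hM.prop.isClosed.prod hM.prop.isClosed)
    fun h hh p hp => ⟨hM.prop.smul_mem h hh _ hp.1, hM.prop.smul_mem h hh _ hp.2⟩, ?_⟩
  intro x hx
  have horbit {k : T} (hk : k ∈ K) (hxk : x ∈ k • M) : closure (orbit H x) = k • M :=
    (hM.smul (hKH hk)).closure_orbit_eq hxk
  ext y
  simp only [mem_preimage, mk_mem_smul_prod_self_iff]
  constructor
  · rintro ⟨k, hk, hxk, hyk⟩
    rwa [horbit hk hxk]
  · intro hy
    obtain ⟨k, hk, m, hm, rfl⟩ := hKM ▸ hx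
    have hxk : k • m ∈ k • M := smul_mem_smul_set hm
    exact ⟨k, hk, hxk, horbit hk hxk ▸ hy⟩

theorem isOpen_setOf_closure_orbit_subset [CompactSpace X] {H G : Subgroup T}
    [CompactSpace (T ⧸ H)] (hH : IsClosed (H : Set T)) (hHG : H ≤ G)
    (hGH : G ≤ Subgroup.normalizer H) (hG : OpenMinimalOrbitClosures X G) {U : Set X}
    (hU : IsOpen U) : IsOpen {x : X | closure (orbit H x) ⊆ U} := by
  refine isOpen_iff_forall_mem_open.mpr fun x hx => ?_
  obtain ⟨hC, hCopen⟩ := hG x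
  obtain ⟨D, hD, hDC⟩ := hC.exists_isClosed_preimage_mk_eq_closure_orbit hH hHG hGH
  have hxC : x ∈ closure (orbit G x) := subset_closure (mem_orbit_self x)
  refine ⟨closure (orbit G x) ∩ {x' | Prod.mk x' ⁻¹' D ⊆ U}, fun x' ⟨hx'C, hx'U⟩ => ?_,
    hCopen.inter (hD.isOpen_setOf_preimage_mk_subset hU), hxC, ?_⟩
  · rwa [mem_ofPred_eq, ← hDC x' hx'C]
  · rwa [mem_ofPred_eq, hDC x hxC]

end UpperSemicontinuity

theorem openMinimalOrbitClosures_of_subnormal_chain {T X : Type*} [Group T] [TopologicalSpace X]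
    [CompactSpace X] [MulAction T X] [ContinuousConstSMul T X]
    (hmin : ∀ x : X, Dense (orbit T x)) {n : ℕ} {c : Fin (n + 1) → Subgroup T}
    (hclast : c (Fin.last n) = ⊤) (hle : ∀ i : Fin n, c i.castSucc ≤ c i.succ)
    (hnorm : ∀ i : Fin n, ((c i.castSucc).subgroupOf (c i.succ)).Normal)
    (hfin : ∀ i : Fin n, 1 ≤ (i : ℕ) → ((c i.castSucc).subgroupOf (c i.succ)).FiniteIndex)
    (i : Fin (n + 1)) (hi : 1 ≤ (i : ℕ)) : OpenMinimalOrbitClosures X (c i) := by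
  induction i using Fin.reverseInduction with
  | last => exact hclast ▸ openMinimalOrbitClosures_top hmin
  | cast i ih =>
    have hi' : 1 ≤ (i : ℕ) := by simpa using hi
    have := hfin i hi'
    exact (ih (by simp)).of_finiteIndex (hle i)
      ((Subgroup.normal_subgroupOf_iff_le_normalizer (hle i)).mp (hnorm i))

theorem orbitClosure_continuous_of_subnormal_finiteIndex_chain_general
    {T X : Type*} [Group T] [TopologicalSpace T] [IsTopologicalGroup T]
    [TopologicalSpace X] [CompactSpace X] [MulAction T X] [ContinuousSMul T X]
    (hmin : ∀ x : X, Dense (orbit T x))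
    (H : Subgroup T) (hHclosed : IsClosed (H : Set T)) (hcc : CompactSpace (T ⧸ H))
    (n : ℕ) (c : Fin (n + 1) → Subgroup T)
    (hc0 : c 0 = H) (hclast : c (Fin.last n) = ⊤)
    (hle : ∀ i : Fin n, c i.castSucc ≤ c i.succ)
    (hnorm : ∀ i : Fin n, ((c i.castSucc).subgroupOf (c i.succ)).Normal)
    (hfin : ∀ i : Fin n, 1 ≤ (i : ℕ) → ((c i.castSucc).subgroupOf (c i.succ)).FiniteIndex) :
    @Continuous X {A : Set X // A.Nonempty ∧ IsClosed A} _ (VietorisTopology X)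
      (fun x => ⟨closure (orbit H x),
        ⟨x, subset_closure (mem_orbit_self x)⟩, isClosed_closure⟩) := by
  obtain ⟨G, hHG, hGH, hG⟩ : ∃ G : Subgroup T, H ≤ G ∧ G ≤ Subgroup.normalizer H ∧
      OpenMinimalOrbitClosures X G := by
    cases n with
    | zero =>
      obtain rfl : H = ⊤ := hc0 ▸ hclast
      exact ⟨⊤, le_rfl, Subgroup.le_normalizer, openMinimalOrbitClosures_top hmin⟩
    | succ n =>
      subst hc0
      exact ⟨c 1, hle 0, (Subgroup.normal_subgroupOf_iff_le_normalizer (hle 0)).mp (hnorm 0),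
        openMinimalOrbitClosures_of_subnormal_chain hmin hclast hle hnorm hfin 1 (by simp)⟩
  refine continuous_generateFrom_iff.mpr ?_
  rintro _ (⟨U, hU, rfl⟩ | ⟨U, hU, rfl⟩)
  · exact isOpen_setOf_closure_orbit_subset hHclosed hHG hGH hG hU
  · exact isOpen_setOf_closure_orbit_inter_nonempty H hU

/-- Let `T` act continuously and minimally on a compact Hausdorff space `X`, and let `H`
be a closed subgroup admitting a subnormal chain `H = c 0 ◁ c 1 ◁ ⋯ ◁ c n = T` in which
`H` is co-compact in `T` and the index `[c (i+1) : c i]` is finite for all `1 ≤ i < n`.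
Then the orbit-closure map `x ↦ cl(H·x)` is Vietoris-continuous. -/
theorem orbitClosure_continuous_of_subnormal_finiteIndex_chain
    {T X : Type*} [Group T] [TopologicalSpace T] [IsTopologicalGroup T] [T2Space T]
    [TopologicalSpace X] [CompactSpace X] [T2Space X] [MulAction T X] [ContinuousSMul T X]
    (hmin : ∀ x : X, Dense (orbit T x))
    (H : Subgroup T) (hHclosed : IsClosed (H : Set T)) (hcc : CompactSpace (T ⧸ H))
    (n : ℕ) (c : Fin (n + 1) → Subgroup T)
    (hc0 : c 0 = H) (hclast : c (Fin.last n) = ⊤)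
    (hle : ∀ i : Fin n, c i.castSucc ≤ c i.succ)
    (hnorm : ∀ i : Fin n, ((c i.castSucc).subgroupOf (c i.succ)).Normal)
    (hfin : ∀ i : Fin n, 1 ≤ (i : ℕ) → ((c i.castSucc).subgroupOf (c i.succ)).FiniteIndex) :
    @Continuous X {A : Set X // A.Nonempty ∧ IsClosed A} _ (VietorisTopology X)
      (fun x => ⟨closure (orbit H x),
        ⟨x, subset_closure (mem_orbit_self x)⟩, isClosed_closure⟩) :=
  orbitClosure_continuous_of_subnormal_finiteIndex_chain_general hmin H hHclosed hcc n c hc0 hclast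
    hle hnorm hfin
end

section
/- Let T be a Hausdorff topological group acting continuously on compact Hausdorff spaces X and Z, let φ : X → Z be a continuous T-equivariant map, and let H be a co-compact closed subgroup of T. Then for any x₁, x₂ ∈ X with φ(x₁) = φ(x₂): the closure of {(t·x₁, t·x₂) : t ∈ T} in X × X meets the diagonal if and only if the closure of {(h·x₁, h·x₂) : h ∈ H} meets the diagonal. That is, P_φ for the T-action equals P_φ for the H-action. -/
/-!
Let `w = (w₁, w₂)` be a diagonal point in the closure of the `T`-orbit of `p = (x₁, x₂)`.
Because `T ⧸ H` is compact, the projection `X × X × T ⧸ H → X × X` is closed, so `w` lifts to a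
point `(w, kH)` in the closure of the `T`-orbit of `(p, H)`. Translating by `k⁻¹` gives
`(k⁻¹ • w, H)` in that closure, and points of the closure lying over the coset `H` are limits of
`h • p` with `h ∈ H`, by openness of `T → T ⧸ H`. Since the diagonal is `T`-invariant, `k⁻¹ • w`
is a diagonal point in the closure of the `H`-orbit of `p`.
-/

open MulAction Pointwise Topology

theorem closure_orbit_subset_image_fst_closure_orbit {M Y W : Type*} [Monoid M]
    [TopologicalSpace Y] [TopologicalSpace W] [CompactSpace W] [MulAction M Y] [MulAction M W]
    (y : Y) (w : W) : closure (orbit M y) ⊆ Prod.fst '' closure (orbit M (y, w)) :=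
  closure_minimal (by rintro _ ⟨m, rfl⟩; exact ⟨m • (y, w), subset_closure ⟨m, rfl⟩, rfl⟩)
    (isClosedMap_fst_of_compactSpace _ isClosed_closure)

section Cocompact

variable {T Y : Type*} [Group T] [TopologicalSpace T] [IsTopologicalGroup T]
  [TopologicalSpace Y] [MulAction T Y] [ContinuousSMul T Y] {H : Subgroup T}

theorem mem_closure_orbit_subgroup_of_mem_closure_orbit_prod_one {p z : Y}
    (hz : (z, ((1 : T) : T ⧸ H)) ∈ closure (orbit T (p, ((1 : T) : T ⧸ H)))) :
    z ∈ closure (orbit H p) := by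
  rw [mem_closure_iff_nhds]
  intro U hU
  have hU' : ∀ᶠ q : T × Y in 𝓝 (1, z), q.1⁻¹ • q.2 ∈ U :=
    (continuous_fst.inv.smul continuous_snd).continuousAt.preimage_mem_nhds (by simpa using hU)
  obtain ⟨V, hV, W, hW, hVW⟩ := mem_nhds_prod_iff.mp hU'
  obtain ⟨_, ⟨htW, v, hv, hvt⟩, t, rfl⟩ := mem_closure_iff_nhds.mp hz (W ×ˢ ((↑) '' V))
    (prod_mem_nhds hW (QuotientGroup.isOpenMap_coe.image_mem_nhds hV))
  have hmem : v⁻¹ * t ∈ H := by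
    rw [← QuotientGroup.eq, hvt, Prod.smul_snd, MulAction.Quotient.smul_mk, smul_eq_mul, mul_one]
  refine ⟨(⟨v⁻¹ * t, hmem⟩ : H) • p, ?_, ⟨_, rfl⟩⟩
  rw [Subgroup.mk_smul, mul_smul]
  exact hVW (show (v, t • p) ∈ V ×ˢ W from ⟨hv, htW⟩)

theorem exists_smul_mem_closure_orbit_subgroup [CompactSpace (T ⧸ H)] {p w : Y}
    (hw : w ∈ closure (orbit T p)) : ∃ k : T, k • w ∈ closure (orbit H p) := by
  obtain ⟨⟨_, η⟩, hwη, rfl⟩ := closure_orbit_subset_image_fst_closure_orbit p ((1 : T) : T ⧸ H) hw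
  obtain ⟨k, rfl⟩ := QuotientGroup.mk_surjective η
  refine ⟨k⁻¹, mem_closure_orbit_subgroup_of_mem_closure_orbit_prod_one ?_⟩
  have := smul_closure_orbit_subset k⁻¹ _ (Set.smul_mem_smul_set hwη)
  rwa [Prod.smul_mk, MulAction.Quotient.smul_mk, smul_eq_mul, inv_mul_cancel] at this

theorem closure_orbit_inter_nonempty_iff_subgroup [CompactSpace (T ⧸ H)] {D : Set Y}
    (hD : ∀ k : T, ∀ y ∈ D, k • y ∈ D) (p : Y) :
    (closure (orbit T p) ∩ D).Nonempty ↔ (closure (orbit H p) ∩ D).Nonempty := by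
  refine ⟨fun ⟨w, hw, hwD⟩ => ?_, fun h => h.mono ?_⟩
  · obtain ⟨k, hk⟩ := exists_smul_mem_closure_orbit_subgroup (H := H) hw
    exact ⟨k • w, hk, hD k w hwD⟩
  · exact Set.inter_subset_inter_left _ (closure_mono (orbit_subgroup_subset H p))

end Cocompact

theorem relativeProximal_iff_cocompact_subgroup_general
    {T X : Type*} [Group T] [TopologicalSpace T] [IsTopologicalGroup T]
    [TopologicalSpace X] [MulAction T X] [ContinuousSMul T X]
    (H : Subgroup T) (hcc : CompactSpace (T ⧸ H))
    (x₁ x₂ : X) :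
    (closure (Set.range fun t : T => (t • x₁, t • x₂)) ∩ Set.diagonal X).Nonempty ↔
      (closure (Set.range fun s : H => (s • x₁, s • x₂)) ∩ Set.diagonal X).Nonempty :=
  closure_orbit_inter_nonempty_iff_subgroup (fun k y hy => congrArg (k • ·) (hy : y.1 = y.2)) (x₁, x₂)

/-- Inheritance of relativized proximality: for `φ : X → Z` a homomorphism of `T`-flows and
`H` a co-compact closed subgroup of `T`, a pair `(x₁, x₂)` with `φ x₁ = φ x₂` is proximal
for the `T`-action iff it is proximal for the restricted `H`-action. -/
theorem relativeProximal_iff_cocompact_subgroup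
    {T X Z : Type*} [Group T] [TopologicalSpace T] [IsTopologicalGroup T] [T2Space T]
    [TopologicalSpace X] [CompactSpace X] [T2Space X] [MulAction T X] [ContinuousSMul T X]
    [TopologicalSpace Z] [CompactSpace Z] [T2Space Z] [MulAction T Z] [ContinuousSMul T Z]
    (φ : X → Z) (hφc : Continuous φ) (hφe : ∀ (t : T) (x : X), φ (t • x) = t • φ x)
    (H : Subgroup T) (hHclosed : IsClosed (H : Set T)) (hcc : CompactSpace (T ⧸ H))
    (x₁ x₂ : X) (hφeq : φ x₁ = φ x₂) :
    (closure (Set.range fun t : T => (t • x₁, t • x₂)) ∩ Set.diagonal X).Nonempty ↔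
      (closure (Set.range fun s : H => (s • x₁, s • x₂)) ∩ Set.diagonal X).Nonempty :=
  relativeProximal_iff_cocompact_subgroup_general H hcc x₁ x₂
end

section
/- Let T be a Hausdorff topological group acting continuously on compact Hausdorff spaces X and Z, let φ : X → Z be a continuous T-equivariant map, and let H be a co-compact closed subgroup of T. Then the T-action on X is φ-distal if and only if the H-action on X is φ-distal; that is, P_φ for the T-action equals the diagonal Δ_X if and only if P_φ for the H-action equals Δ_X. -/
/-!
For co-compact `H` the relations `P_φ(T)` and `P_φ(H)` coincide. If `tᵢ • (x₁, x₂) → z ∈ Δ`,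
compactness of `T ⧸ H` gives a cluster point `tH` of the cosets `tᵢH`; writing `tᵢ = gᵢhᵢ` with
`gᵢ → t` and `hᵢ ∈ H`, the translates `hᵢ • (x₁, x₂)` accumulate at `t⁻¹ • z`, again on `Δ`.
-/

open Set Topology

/-- The relation `P_φ` of the `S`-action. -/
def relProximal (S : Type*) {X Z : Type*} [SMul S X] [TopologicalSpace X] (φ : X → Z) :
    Set (X × X) :=
  {p | φ p.1 = φ p.2 ∧ (closure (range fun s : S => (s • p.1, s • p.2)) ∩ diagonal X).Nonempty}

section OrbitClosure

variable {T Y : Type*} [Group T] [TopologicalSpace T] [IsTopologicalGroup T]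
  [TopologicalSpace Y] [MulAction T Y] [ContinuousSMul T Y] (H : Subgroup T)

theorem inv_smul_mem_closure_subgroup_orbit {p w : Y} {t : T}
    (hw : (w, (t : T ⧸ H)) ∈ closure (range fun s : T => (s • p, (s : T ⧸ H)))) :
    t⁻¹ • w ∈ closure (range fun h : H => (h : T) • p) := by
  refine mem_closure_iff_nhds.mpr fun V hV => ?_
  have hcont : ContinuousAt (fun q : T × Y => q.1⁻¹ • q.2) (t, w) := by fun_prop
  obtain ⟨N, hN, V', hV', hNV⟩ := mem_nhds_prod_iff.mp (hcont hV)
  have hNH : (QuotientGroup.mk '' N : Set (T ⧸ H)) ∈ 𝓝 (t : T ⧸ H) :=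
    QuotientGroup.isOpenMap_coe.image_mem_nhds hN
  obtain ⟨_, ⟨hsV', g, hgN, hgs⟩, s, rfl⟩ :=
    mem_closure_iff_nhds.mp hw _ (prod_mem_nhds hV' hNH)
  have hgsH : g⁻¹ * s ∈ H := QuotientGroup.eq.mp hgs
  refine ⟨(g⁻¹ * s) • p, ?_, ⟨g⁻¹ * s, hgsH⟩, rfl⟩
  rw [mul_smul]
  exact hNV (mk_mem_prod hgN hsV')

theorem exists_smul_mem_closure_subgroup_orbit [CompactSpace (T ⧸ H)] {p w : Y}
    (hw : w ∈ closure (range fun t : T => t • p)) :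
    ∃ t : T, t • w ∈ closure (range fun h : H => (h : T) • p) := by
  set graph := range fun s : T => (s • p, (s : T ⧸ H))
  have horbit : range (fun t : T => t • p) ⊆ Prod.fst '' closure graph := by
    rintro _ ⟨t, rfl⟩
    exact ⟨_, subset_closure ⟨t, rfl⟩, rfl⟩
  have hclosed : IsClosed (Prod.fst '' closure graph) :=
    isClosedMap_fst_of_compactSpace _ isClosed_closure
  obtain ⟨⟨_, q⟩, hq, rfl⟩ := closure_minimal horbit hclosed hw
  obtain ⟨t, rfl⟩ := QuotientGroup.mk_surjective q
  exact ⟨t⁻¹, inv_smul_mem_closure_subgroup_orbit H hq⟩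

end OrbitClosure

theorem relProximal_subgroup_eq_of_cocompact {T X Z : Type*} [Group T] [TopologicalSpace T]
    [IsTopologicalGroup T] [TopologicalSpace X] [MulAction T X] [ContinuousSMul T X]
    (φ : X → Z) (H : Subgroup T) [CompactSpace (T ⧸ H)] :
    relProximal H φ = relProximal T φ := by
  refine Subset.antisymm (fun p ⟨hφ, z, hz, hzΔ⟩ => ⟨hφ, z, ?_, hzΔ⟩)
    (fun p ⟨hφ, z, hz, hzΔ⟩ => ?_)
  · exact closure_mono (range_comp_subset_range (fun h : H => (h : T)) _) hz
  · obtain ⟨t, ht⟩ := exists_smul_mem_closure_subgroup_orbit H hz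
    exact ⟨hφ, t • z, ht, congrArg (t • ·) hzΔ⟩

theorem relativeDistal_iff_cocompact_subgroup_general
    {T X Z : Type*} [Group T] [TopologicalSpace T] [IsTopologicalGroup T]
    [TopologicalSpace X] [MulAction T X] [ContinuousSMul T X]
    (φ : X → Z)
    (H : Subgroup T) (hcc : CompactSpace (T ⧸ H)) :
    ({p : X × X | φ p.1 = φ p.2 ∧
        (closure (Set.range fun t : T => (t • p.1, t • p.2)) ∩ Set.diagonal X).Nonempty} =
      Set.diagonal X) ↔
    ({p : X × X | φ p.1 = φ p.2 ∧
        (closure (Set.range fun s : H => (s • p.1, s • p.2)) ∩ Set.diagonal X).Nonempty} =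
      Set.diagonal X) := by
  change relProximal T φ = diagonal X ↔ relProximal H φ = diagonal X
  rw [relProximal_subgroup_eq_of_cocompact φ H]

/-- Inheritance of relativized distality: for `φ : X → Z` a homomorphism of `T`-flows and
`H` a co-compact closed subgroup of `T`, the `T`-action on `X` is `φ`-distal iff the
restricted `H`-action is `φ`-distal, i.e. `P_φ(T) = Δ_X ↔ P_φ(H) = Δ_X`. -/
theorem relativeDistal_iff_cocompact_subgroup
    {T X Z : Type*} [Group T] [TopologicalSpace T] [IsTopologicalGroup T] [T2Space T]
    [TopologicalSpace X] [CompactSpace X] [T2Space X] [MulAction T X] [ContinuousSMul T X]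
    [TopologicalSpace Z] [CompactSpace Z] [T2Space Z] [MulAction T Z] [ContinuousSMul T Z]
    (φ : X → Z) (hφc : Continuous φ) (hφe : ∀ (t : T) (x : X), φ (t • x) = t • φ x)
    (H : Subgroup T) (hHclosed : IsClosed (H : Set T)) (hcc : CompactSpace (T ⧸ H)) :
    ({p : X × X | φ p.1 = φ p.2 ∧
        (closure (Set.range fun t : T => (t • p.1, t • p.2)) ∩ Set.diagonal X).Nonempty} =
      Set.diagonal X) ↔
    ({p : X × X | φ p.1 = φ p.2 ∧
        (closure (Set.range fun s : H => (s • p.1, s • p.2)) ∩ Set.diagonal X).Nonempty} =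
      Set.diagonal X) :=
  relativeDistal_iff_cocompact_subgroup_general φ H hcc
end

section
/- Let T be a Hausdorff topological group acting continuously on a compact Hausdorff space X, and let H be a co-compact closed subgroup of T. Consider the diagonal action of T on X × T/H given by t·(x, sH) = (t·x, tsH). This action on X × T/H is minimal if and only if both the T-action on X is minimal and the restricted H-action on X is minimal. -/
/-!
Every point of `X × T/H` can be moved by `T` into the fibre `X × {H}`, and the `T`-orbit of
`(x, H)` meets that fibre exactly in `(H • x) × {H}`. Closures behave the same way: the set of
`(z, sH)` such that `s⁻¹ • z ∈ C` for every representative `s` is closed whenever `C` is,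
since its complement is the image of an open set under the open map `X × T → X × T/H`.
Taking `C = closure (H • x)` shows that `(y, H)` lies in the closure of the orbit of `(x, H)`
iff `y` lies in the closure of `H • x`.
-/

open MulAction

section DenseOrbit

variable {G Y : Type*} [Group G] [TopologicalSpace Y] [MulAction G Y] [ContinuousConstSMul G Y]

theorem dense_orbit_iff_subset_closure_orbit {S : Set Y} (hS : ∀ y, ∃ g : G, g • y ∈ S)
    {p : Y} : Dense (orbit G p) ↔ S ⊆ closure (orbit G p) := by
  refine ⟨fun hp => hp.closure_eq ▸ Set.subset_univ S, fun hSp y => ?_⟩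
  obtain ⟨g, hg⟩ := hS y
  simpa using smul_closure_orbit_subset g⁻¹ p (Set.smul_mem_smul_set (hSp hg))

theorem forall_dense_orbit_iff {S : Set Y} (hS : ∀ y, ∃ g : G, g • y ∈ S) :
    (∀ p : Y, Dense (orbit G p)) ↔ ∀ p ∈ S, S ⊆ closure (orbit G p) := by
  refine ⟨fun h p _ => (dense_orbit_iff_subset_closure_orbit hS).1 (h p), fun h p => ?_⟩
  obtain ⟨g, hg⟩ := hS p
  rw [← orbit_smul g p, dense_orbit_iff_subset_closure_orbit hS]
  exact h _ hg

end DenseOrbit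

section Induced

variable {T X : Type*} [Group T] [TopologicalSpace T] [IsTopologicalGroup T]
  [TopologicalSpace X] [MulAction T X] [ContinuousSMul T X] (H : Subgroup T)

theorem isClosed_setOf_forall_inv_smul_mem {C : Set X} (hC : IsClosed C) :
    IsClosed {p : X × T ⧸ H | ∀ s : T, (s : T ⧸ H) = p.2 → s⁻¹ • p.1 ∈ C} := by
  have hopen : IsOpenMap (Prod.map id (QuotientGroup.mk : T → T ⧸ H)) :=
    (IsOpenMap.id : IsOpenMap (id : X → X)).prodMap QuotientGroup.isOpenMap_coe
  have hU : IsOpen {q : X × T | q.2⁻¹ • q.1 ∉ C} :=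
    (hC.preimage (by fun_prop)).isOpen_compl
  convert (hopen _ hU).isClosed_compl using 1
  ext ⟨z, t⟩
  simpa using forall_congr' fun _ => not_imp_not.symm

theorem mem_closure_orbit_prod_iff {x y : X} :
    (y, ((1 : T) : T ⧸ H)) ∈ closure (orbit T (x, ((1 : T) : T ⧸ H))) ↔
      y ∈ closure (orbit H x) := by
  constructor
  · intro hy
    have hsub : orbit T (x, ((1 : T) : T ⧸ H)) ⊆
        {p | ∀ s : T, (s : T ⧸ H) = p.2 → s⁻¹ • p.1 ∈ closure (orbit H x)} := by
      rintro _ ⟨t, rfl⟩ s hs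
      have hst : s⁻¹ * t ∈ H := QuotientGroup.eq.1 (by simpa using hs)
      exact subset_closure ⟨⟨s⁻¹ * t, hst⟩, mul_smul s⁻¹ t x⟩
    have hclosed := isClosed_setOf_forall_inv_smul_mem H (isClosed_closure (s := orbit H x))
    simpa using closure_minimal hsub hclosed hy 1 rfl
  · intro hy
    have hsub : (fun z : X => (z, ((1 : T) : T ⧸ H))) '' orbit H x ⊆
        orbit T (x, ((1 : T) : T ⧸ H)) := by
      rintro _ ⟨_, ⟨h, rfl⟩, rfl⟩
      exact ⟨h, Prod.ext rfl (QuotientGroup.eq.2 (by simp))⟩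
    exact closure_mono hsub (image_closure_subset_closure_image (by fun_prop) ⟨y, hy, rfl⟩)

end Induced

theorem prod_quotient_minimal_iff_general
    {T X : Type*} [Group T] [TopologicalSpace T] [IsTopologicalGroup T]
    [TopologicalSpace X] [MulAction T X] [ContinuousSMul T X]
    (H : Subgroup T) :
    (∀ p : X × (T ⧸ H), Dense (orbit T p)) ↔
      (∀ x : X, Dense (orbit T x)) ∧ (∀ x : X, Dense (orbit H x)) := by
  have hfibre : ∀ p : X × T ⧸ H,
      ∃ t : T, t • p ∈ Set.range fun z : X => (z, ((1 : T) : T ⧸ H)) := by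
    rintro ⟨z, q⟩
    obtain ⟨s, rfl⟩ := QuotientGroup.mk_surjective q
    exact ⟨s⁻¹, s⁻¹ • z, Prod.ext rfl (by simp)⟩
  rw [forall_dense_orbit_iff hfibre]
  simp only [Set.forall_mem_range, Set.range_subset_iff, mem_closure_orbit_prod_iff]
  exact ⟨fun h => ⟨fun x => Dense.mono (orbit_subgroup_subset H x) (h x), h⟩, And.right⟩

/-- For `H` a co-compact closed subgroup of `T`, the diagonal `T`-action on `X × T/H`
(with `t • (x, sH) = (t • x, (t*s)H)`) is minimal iff the `T`-action on `X` is minimal and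
the restricted `H`-action on `X` is minimal. -/
theorem prod_quotient_minimal_iff
    {T X : Type*} [Group T] [TopologicalSpace T] [IsTopologicalGroup T] [T2Space T]
    [TopologicalSpace X] [CompactSpace X] [T2Space X] [MulAction T X] [ContinuousSMul T X]
    (H : Subgroup T) (hHclosed : IsClosed (H : Set T)) (hcc : CompactSpace (T ⧸ H)) :
    (∀ p : X × (T ⧸ H), Dense (orbit T p)) ↔
      (∀ x : X, Dense (orbit T x)) ∧ (∀ x : X, Dense (orbit H x)) :=
  prod_quotient_minimal_iff_general H
end

section
/- Let T be a Hausdorff topological group and let S be a closed subsemigroup of T (nonempty, closed, and closed under multiplication) such that for every neighborhood V of the identity e there exists a finite set F ⊆ T with F·V·S = T. Then S is a subgroup of T (i.e., S contains e and is closed under inversion). -/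
open Pointwise Set Topology

/-!
Fix `s ∈ S`; it suffices to show that `1` lies in the closed set `S s`. Given a neighbourhood
`V` of `1` with `T = F V S`, start from any `y₀ ∈ F V` and write recursively `yₙ s⁻¹ = yₙ₊₁ xₙ₊₁`
with `yₙ₊₁ ∈ F V` and `xₙ₊₁ ∈ S`. Then `yₙ₊₁⁻¹ yₙ = xₙ₊₁ s` lies in the semigroup `S s`, hence
so does `yⱼ⁻¹ yᵢ` for all `i < j`. As `F` is finite, two of the `yₙ` share their `F`-factor, and for
those `yⱼ⁻¹ yᵢ ∈ V⁻¹ V`. So `S s` meets every neighbourhood of `1`.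
-/

section

variable {G : Type*} [Group G]

theorem exists_seq_inv_mul_mem_image_mul_right {A S : Set G} (hcover : A * S = univ) (s : G) :
    ∃ y : ℕ → G, (∀ n, y n ∈ A) ∧ ∀ n, (y (n + 1))⁻¹ * y n ∈ (· * s) '' S := by
  have hdec : ∀ g : G, ∃ a ∈ A, ∃ x ∈ S, a * x = g := fun g => by
    simpa only [← mem_mul, hcover] using mem_univ g
  choose a ha x hx hax using hdec
  refine ⟨fun n => (fun g => a (g * s⁻¹))^[n] (a 1), fun n => ?_, fun n => ?_⟩
  · cases n <;> simp only [Function.iterate_succ_apply', Function.iterate_zero_apply, ha]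
  · set g := (fun g => a (g * s⁻¹))^[n] (a 1)
    refine ⟨x (g * s⁻¹), hx _, ?_⟩
    dsimp only
    rw [Function.iterate_succ_apply', eq_inv_mul_iff_mul_eq, ← mul_assoc, hax,
      inv_mul_cancel_right]

namespace Subsemigroup

def mulRight (S : Subsemigroup G) {s : G} (hs : s ∈ S) : Subsemigroup G where
  carrier := (· * s) '' S
  mul_mem' := by
    rintro _ _ ⟨a, ha, rfl⟩ ⟨b, hb, rfl⟩
    exact ⟨a * s * b, S.mul_mem (S.mul_mem ha hs) hb, by simp only [mul_assoc]⟩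

theorem inv_mul_mem_of_lt (R : Subsemigroup G) {y : ℕ → G}
    (hy : ∀ n, (y (n + 1))⁻¹ * y n ∈ R) {i j : ℕ} (hij : i < j) : (y j)⁻¹ * y i ∈ R := by
  induction j, hij using Nat.le_induction with
  | base => exact hy i
  | succ j _ ih => simpa only [mul_assoc, mul_inv_cancel_left] using R.mul_mem (hy j) ih

theorem exists_mul_mem_inv_mul (S : Subsemigroup G) {s : G} (hs : s ∈ S) {F V : Set G}
    (hF : F.Finite) (hcover : F * V * (S : Set G) = univ) : ∃ z ∈ S, z * s ∈ V⁻¹ * V := by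
  obtain ⟨y, hyFV, hy⟩ := exists_seq_inv_mul_mem_image_mul_right hcover s
  choose f hf v hv hfv using hyFV
  beta_reduce at hfv
  obtain ⟨i, j, hij, hfij⟩ := hF.exists_lt_map_eq_of_forall_mem hf
  obtain ⟨z, hz, hzs : z * s = _⟩ := (S.mulRight hs).inv_mul_mem_of_lt hy hij
  refine ⟨z, hz, ?_⟩
  rw [hzs, ← hfv i, ← hfv j, hfij]
  exact ⟨(v j)⁻¹, inv_mem_inv.2 (hv j), v i, hv i, by group⟩

theorem inv_mem_of_isClosed [TopologicalSpace G] [IsTopologicalGroup G] (S : Subsemigroup G)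
    (hclosed : IsClosed (S : Set G))
    (hfill : ∀ V ∈ 𝓝 (1 : G), ∃ F : Set G, F.Finite ∧ F * V * (S : Set G) = univ)
    {s : G} (hs : s ∈ S) : s⁻¹ ∈ S := by
  have h1 : (1 : G) ∈ _root_.closure ((· * s) '' (S : Set G)) := by
    refine mem_closure_iff_nhds.2 fun W hW => ?_
    obtain ⟨V, hV, -, hVinv, hVW⟩ := exists_closed_nhds_one_inv_eq_mul_subset hW
    obtain ⟨F, hF, hcover⟩ := hfill V hV
    obtain ⟨z, hz, hzs⟩ := S.exists_mul_mem_inv_mul hs hF hcover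
    exact ⟨z * s, hVW (by rwa [hVinv] at hzs), z, hz, rfl⟩
  have hclosed_mul : IsClosed ((· * s) '' (S : Set G)) :=
    (Homeomorph.mulRight s).isClosedMap _ hclosed
  rw [hclosed_mul.closure_eq] at h1
  obtain ⟨z, hz, hzs⟩ := h1
  rwa [← eq_inv_of_mul_eq_one_left hzs]

end Subsemigroup

end

theorem subgroup_of_closed_subsemigroup_general
    {T : Type*} [Group T] [TopologicalSpace T] [IsTopologicalGroup T]
    (S : Set T) (hne : S.Nonempty) (hclosed : IsClosed S)
    (hmul : ∀ a ∈ S, ∀ b ∈ S, a * b ∈ S)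
    (hfill : ∀ V ∈ nhds (1 : T), ∃ F : Set T, F.Finite ∧ F * V * S = Set.univ) :
    (1 : T) ∈ S ∧ ∀ s ∈ S, s⁻¹ ∈ S := by
  let S' : Subsemigroup T := ⟨S, fun ha hb => hmul _ ha _ hb⟩
  have hinv : ∀ s ∈ S, s⁻¹ ∈ S := fun s hs => S'.inv_mem_of_isClosed hclosed hfill hs
  obtain ⟨s, hs⟩ := hne
  exact ⟨by simpa only [inv_mul_cancel] using hmul _ (hinv s hs) _ hs, hinv⟩

/-- If `S` is a closed subsemigroup of a Hausdorff topological group `T` such that for every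
neighborhood `V` of the identity there is a finite set `F` with `F·V·S = T`, then `S` is a
subgroup of `T` (it contains the identity and is closed under inversion). -/
theorem subgroup_of_closed_subsemigroup
    {T : Type*} [Group T] [TopologicalSpace T] [IsTopologicalGroup T] [T2Space T]
    (S : Set T) (hne : S.Nonempty) (hclosed : IsClosed S)
    (hmul : ∀ a ∈ S, ∀ b ∈ S, a * b ∈ S)
    (hfill : ∀ V ∈ nhds (1 : T), ∃ F : Set T, F.Finite ∧ F * V * S = Set.univ) :
    (1 : T) ∈ S ∧ ∀ s ∈ S, s⁻¹ ∈ S :=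
  subgroup_of_closed_subsemigroup_general S hne hclosed hmul hfill
end

section
/- Let T be a Hausdorff topological group and let S be a syndetic closed subsemigroup of T. Then S is a syndetic closed subgroup of T. -/
open Pointwise

/-!
Take a compact `K` with `K⁻¹ * S = G`, i.e. every right translate `S * {t}` meets `K`; replacing `K`
by its closure (still compact in a topological group) we may assume `K` closed. By Zorn's lemma
and compactness there is a minimal nonempty closed `C ⊆ K` with `S * C ∩ K ⊆ C`. For `c ∈ C`,
the set `S * {c} ∩ C` again has these properties because `S * S ⊆ S`, so it is all of `C`; hence
`c = s * c` for some `s ∈ S`, i.e. `1 ∈ S`. Applying this to the closed syndetic subsemigroup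
`S * {a}`, for `a ∈ S`, gives `a⁻¹ ∈ S`.
-/

open Set

section Trap

variable {M : Type*} [Mul M] [TopologicalSpace M]

def IsTrap (S K C : Set M) : Prop :=
  C.Nonempty ∧ IsClosed C ∧ C ⊆ K ∧ S * C ∩ K ⊆ C

theorem exists_minimal_isTrap (S : Set M) {K : Set M} (hK : IsCompact K) (hKc : IsClosed K)
    (hKne : K.Nonempty) : ∃ C, Minimal (IsTrap S K) C := by
  have hKtrap : IsTrap S K K := ⟨hKne, hKc, subset_rfl, inter_subset_right⟩
  refine (zorn_superset_nonempty {C | IsTrap S K C} ?_ K hKtrap).imp fun C hC => hC.2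
  intro c hc hchain ⟨C₀, hC₀⟩
  have : Nonempty c := ⟨⟨C₀, hC₀⟩⟩
  refine ⟨⋂₀ c, ⟨?nonempty, ?closed, ?sub, ?inv⟩, fun U hU => sInter_subset_of_mem hU⟩
  case nonempty =>
    exact IsCompact.nonempty_sInter_of_directed_nonempty_isCompact_isClosed
      (hchain.symm.directedOn (r := (· ≥ ·))) (fun U hU => (hc hU).1)
      (fun U hU => hK.of_isClosed_subset (hc hU).2.1 (hc hU).2.2.1) (fun U hU => (hc hU).2.1)
  case closed => exact isClosed_sInter fun U hU => (hc hU).2.1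
  case sub => exact (sInter_subset_of_mem hC₀).trans (hc hC₀).2.2.1
  case inv =>
    refine subset_sInter fun U hU => ?_
    calc S * ⋂₀ c ∩ K ⊆ S * U ∩ K := by gcongr; exact sInter_subset_of_mem hU
      _ ⊆ U := (hc hU).2.2.2

end Trap

section Group

variable {G : Type*} [Group G]

theorem Set.exists_mul_mem_of_inv_mul_eq_univ {K A : Set G} (h : K⁻¹ * A = univ) (t : G) :
    ∃ a ∈ A, a * t ∈ K := by
  obtain ⟨k, hk, a, ha, hka⟩ := h ▸ mem_univ t⁻¹
  refine ⟨a, ha, ?_⟩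
  rwa [← inv_inv t, ← hka, mul_inv_rev, mul_inv_cancel_left]

namespace Syndetic

variable [TopologicalSpace G]

theorem exists_isClosed [IsTopologicalGroup G] {A : Set G} (h : Syndetic A) :
    ∃ K, IsCompact K ∧ IsClosed K ∧ K⁻¹ * A = univ := by
  obtain ⟨K, hK, hKA⟩ := h
  refine ⟨closure K, hK.closure, isClosed_closure, eq_univ_of_subset ?_ hKA⟩
  exact mul_subset_mul_right (inv_subset_inv.2 subset_closure)

theorem mul_singleton {A : Set G} (h : Syndetic A) (a : G) : Syndetic (A * {a}) := by
  obtain ⟨K, hK, hKA⟩ := h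
  exact ⟨K, hK, by rw [← mul_assoc, hKA, univ_mul (singleton_nonempty a)]⟩

end Syndetic

variable [TopologicalSpace G] [IsTopologicalGroup G] {S : Set G}

theorem one_mem_of_minimal_isTrap (hSS : S * S ⊆ S) (hS : IsClosed S) {K C : Set G}
    (hKS : K⁻¹ * S = univ) (hC : Minimal (IsTrap S K) C) : (1 : G) ∈ S := by
  obtain ⟨⟨c, hc⟩, hCc, hCK, hCinv⟩ := hC.1
  have hD : IsTrap S K (S * {c} ∩ C) := by
    refine ⟨?_, (hS.mul_right_of_isCompact isCompact_singleton).inter hCc,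
      inter_subset_right.trans hCK, ?_⟩
    · obtain ⟨s, hs, hsc⟩ := exists_mul_mem_of_inv_mul_eq_univ hKS c
      exact ⟨s * c, mul_mem_mul hs rfl, hCinv ⟨mul_mem_mul hs hc, hsc⟩⟩
    · calc S * (S * {c} ∩ C) ∩ K ⊆ S * S * {c} ∩ (S * C ∩ K) := by
            rw [mul_assoc]
            exact subset_inter (inter_subset_left.trans (mul_subset_mul_left inter_subset_left))
              (inter_subset_inter_left K (mul_subset_mul_left inter_subset_right))
        _ ⊆ S * {c} ∩ C := by gcongr
  obtain ⟨⟨s, hs, _, rfl, hsc⟩, -⟩ := hC.2 hD inter_subset_right hc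
  rwa [mul_eq_right.1 hsc] at hs

theorem one_mem_of_syndetic (hSS : S * S ⊆ S) (hS : IsClosed S) (hsyn : Syndetic S) :
    (1 : G) ∈ S := by
  obtain ⟨K, hK, hKc, hKS⟩ := hsyn.exists_isClosed
  obtain ⟨s, -, hs⟩ := exists_mul_mem_of_inv_mul_eq_univ hKS 1
  obtain ⟨C, hC⟩ := exists_minimal_isTrap S hK hKc ⟨_, hs⟩
  exact one_mem_of_minimal_isTrap hSS hS hKS hC

theorem inv_mem_of_syndetic (hSS : S * S ⊆ S) (hS : IsClosed S) (hsyn : Syndetic S) {a : G}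
    (ha : a ∈ S) : a⁻¹ ∈ S := by
  have hSa : S * {a} * (S * {a}) ⊆ S * {a} := calc
    S * {a} * (S * {a}) = S * ({a} * S) * {a} := by simp only [mul_assoc]
    _ ⊆ S * S * {a} := by
      gcongr
      exact (mul_subset_mul_right (singleton_subset_iff.2 ha)).trans hSS
    _ ⊆ S * {a} := by gcongr
  obtain ⟨s, hs, _, rfl, hsa⟩ :=
    one_mem_of_syndetic hSa (hS.mul_right_of_isCompact isCompact_singleton) (hsyn.mul_singleton a)
  rwa [← eq_inv_of_mul_eq_one_left hsa]

end Group

theorem syndetic_closed_subsemigroup_is_subgroup_general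
    {T : Type*} [Group T] [TopologicalSpace T] [IsTopologicalGroup T]
    (S : Set T) (hclosed : IsClosed S)
    (hmul : ∀ a ∈ S, ∀ b ∈ S, a * b ∈ S) (hsyn : Syndetic S) :
    ∃ S' : Subgroup T, (S' : Set T) = S ∧ IsClosed (S' : Set T) ∧ Syndetic (S' : Set T) := by
  have hSS : S * S ⊆ S := mul_subset_iff.2 hmul
  let H : Subgroup T :=
    { carrier := S
      mul_mem' := fun ha hb => hmul _ ha _ hb
      one_mem' := one_mem_of_syndetic hSS hclosed hsyn
      inv_mem' := inv_mem_of_syndetic hSS hclosed hsyn }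
  exact ⟨H, rfl, hclosed, hsyn⟩

/-- A syndetic closed subsemigroup `S` of a Hausdorff topological group `T` is a syndetic
closed subgroup of `T`. -/
theorem syndetic_closed_subsemigroup_is_subgroup
    {T : Type*} [Group T] [TopologicalSpace T] [IsTopologicalGroup T] [T2Space T]
    (S : Set T) (hne : S.Nonempty) (hclosed : IsClosed S)
    (hmul : ∀ a ∈ S, ∀ b ∈ S, a * b ∈ S) (hsyn : Syndetic S) :
    ∃ S' : Subgroup T, (S' : Set T) = S ∧ IsClosed (S' : Set T) ∧ Syndetic (S' : Set T) :=
  syndetic_closed_subsemigroup_is_subgroup_general S hclosed hmul hsyn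
end

section
/- Let T be a Hausdorff topological group acting continuously on a compact Hausdorff space X, let x ∈ X, and let H be a normal co-compact closed subgroup of T. Then E_x[H] is a co-compact closed subgroup of T containing H, and the left-translation action of T on the coset space T/E_x[H] is a minimal equicontinuous (almost periodic) flow. -/
/-!
Since `H` is normal, every `t` with `t • x ∈ cl(H·x)` maps `cl(H·x)` into itself, so `E_x[H]` is a
closed submonoid of `T` containing `H`. Its image in the compact group `T/H` is a closed submonoid,
hence a subgroup, because in a compact group `a⁻¹` is a limit of positive powers of `a`. The action
of `T` on `T/E_x[H]` is transitive and factors through the compact group `T/H`, since the normal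
subgroup `H ≤ E_x[H]` acts trivially; a family of maps continuously parametrised by a compact space
is equicontinuous by the tube lemma.
-/

open MulAction Topology Set Pointwise

section CompactGroup

variable {G : Type*} [Group G] [TopologicalSpace G] [IsTopologicalGroup G]

theorem inv_mem_closure_range_pow [CompactSpace G] (a : G) :
    a⁻¹ ∈ closure (range (a ^ · : ℕ → G)) := by
  rw [← closure_range_zpow_eq_pow]
  exact subset_closure ⟨-1, zpow_neg_one a⟩

theorem Submonoid.inv_mem_of_isClosed [CompactSpace G] (M : Submonoid G)
    (hM : IsClosed (M : Set G)) {a : G} (ha : a ∈ M) : a⁻¹ ∈ M :=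
  hM.closure_subset_iff.2 (range_subset_iff.2 (pow_mem ha)) (inv_mem_closure_range_pow a)

theorem Submonoid.inv_mem_of_isClosed_of_le {N : Subgroup G} [N.Normal]
    [CompactSpace (G ⧸ N)] (M : Submonoid G) (hM : IsClosed (M : Set G))
    (hNM : N.toSubmonoid ≤ M) {a : G} (ha : a ∈ M) : a⁻¹ ∈ M := by
  have hsat : ∀ m ∈ M, ∀ g : G, (m : G ⧸ N) = g → g ∈ M := fun m hm g hmg => by
    simpa using M.mul_mem hm (hNM (QuotientGroup.eq.mp hmg))
  have hclosed : IsClosed (M.map (QuotientGroup.mk' N) : Set (G ⧸ N)) := by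
    rw [← (QuotientGroup.isQuotientMap_mk N).isClosed_preimage]
    convert hM using 1
    ext g
    exact ⟨fun ⟨m, hm, hmg⟩ => hsat m hm _ hmg, fun hg => ⟨_, hg, rfl⟩⟩
  obtain ⟨m, hm, hma⟩ :=
    (M.map _).inv_mem_of_isClosed hclosed (M.mem_map_of_mem (QuotientGroup.mk' N) ha)
  exact hsat m hm _ (by simpa using hma)

end CompactGroup

theorem exists_mem_nhdsSet_diagonal_forall_mem_of_compactSpace {K Y : Type*}
    [TopologicalSpace K] [CompactSpace K] [TopologicalSpace Y] {f : K × Y → Y}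
    (hf : Continuous f) {ε : Set (Y × Y)} (hε : ε ∈ 𝓝ˢ (diagonal Y)) :
    ∃ δ ∈ 𝓝ˢ (diagonal Y), ∀ p ∈ δ, ∀ k, (f (k, p.1), f (k, p.2)) ∈ ε := by
  refine ⟨{p | ∀ k, (f (k, p.1), f (k, p.2)) ∈ ε}, mem_nhdsSet_iff_forall.2 ?_, fun p hp => hp⟩
  rintro ⟨y, y'⟩ (rfl : y = y')
  refine (isCompact_univ.eventually_forall_of_forall_eventually
    (P := fun p k => (f (k, p.1), f (k, p.2)) ∈ ε) fun k _ => ?_).mono fun p hp k => hp k trivial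
  have hcont : Continuous fun z : (Y × Y) × K => (f (z.2, z.1.1), f (z.2, z.1.2)) := by fun_prop
  exact hcont.continuousAt.preimage_mem_nhds (mem_nhdsSet_iff_forall.1 hε _ rfl)

theorem exists_mem_nhdsSet_diagonal_forall_smul_mem {G Y : Type*} [Group G] [TopologicalSpace G]
    [IsTopologicalGroup G] [TopologicalSpace Y] [MulAction G Y] [ContinuousSMul G Y]
    (N : Subgroup G) [CompactSpace (G ⧸ N)] (hN : ∀ n ∈ N, ∀ y : Y, n • y = y)
    {ε : Set (Y × Y)} (hε : ε ∈ 𝓝ˢ (diagonal Y)) :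
    ∃ δ ∈ 𝓝ˢ (diagonal Y), ∀ p ∈ δ, ∀ g : G, (g • p.1, g • p.2) ∈ ε := by
  let f : (G ⧸ N) × Y → Y := fun qy => Quotient.liftOn' qy.1 (· • qy.2) fun a b hab => by
    rw [← mul_inv_cancel_left a b, mul_smul, hN _ (QuotientGroup.leftRel_apply.mp hab)]
  have hf : Continuous f := by
    rw [← (QuotientGroup.isOpenQuotientMap_mk.prodMap IsOpenQuotientMap.id).continuous_comp_iff]
    exact continuous_smul
  obtain ⟨δ, hδ, hδε⟩ := exists_mem_nhdsSet_diagonal_forall_mem_of_compactSpace hf hε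
  exact ⟨δ, hδ, fun p hp g => hδε p hp g⟩

theorem QuotientGroup.smul_eq_self_of_le {G : Type*} [Group G] {N E : Subgroup G} [N.Normal]
    (hNE : N ≤ E) {n : G} (hn : n ∈ N) (q : G ⧸ E) : n • q = q := by
  have : n ∈ (MulAction.toPermHom G (G ⧸ E)).ker :=
    E.normalCore_eq_ker ▸ Subgroup.normal_le_normalCore.mpr hNE hn
  exact Equiv.Perm.ext_iff.mp this q

theorem Subgroup.continuous_quotientMapOfLE {G : Type*} [Group G] [TopologicalSpace G]
    {N E : Subgroup G} (h : N ≤ E) : Continuous (quotientMapOfLE h) :=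
  continuous_id.quotient_map' _

theorem Subgroup.quotientMapOfLE_surjective {G : Type*} [Group G]
    {N E : Subgroup G} (h : N ≤ E) : Function.Surjective (quotientMapOfLE h) :=
  fun q => QuotientGroup.induction_on q fun g => ⟨g, rfl⟩

section Envelope

variable {T X : Type*} [Group T] [MulAction T X] [TopologicalSpace X] (H : Subgroup T) (x : X)

theorem smul_closure_orbit_subset_of_mem [ContinuousConstSMul T X] {h : T} (hh : h ∈ H) :
    h • closure (orbit H x) ⊆ closure (orbit H x) :=
  (smul_closure_subset h _).trans (closure_mono (smul_orbit_subset (⟨h, hh⟩ : H) x))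

theorem smul_closure_orbit_subset_of_smul_mem [ContinuousConstSMul T X] [H.Normal] {t : T}
    (ht : t • x ∈ closure (orbit H x)) : t • closure (orbit H x) ⊆ closure (orbit H x) := by
  refine (smul_closure_subset t _).trans (closure_minimal ?_ isClosed_closure)
  rintro _ ⟨_, ⟨h, rfl⟩, rfl⟩
  have hconj : t • h • x = (t * h * t⁻¹) • t • x := by simp [Subgroup.smul_def, smul_smul]
  show t • h • x ∈ _
  rw [hconj]
  exact smul_closure_orbit_subset_of_mem H x (‹H.Normal›.conj_mem h h.2 t) ⟨_, ht, rfl⟩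

def envelope [ContinuousConstSMul T X] [H.Normal] : Submonoid T where
  carrier := {t | t • x ∈ closure (orbit H x)}
  one_mem' := by simpa using subset_closure (mem_orbit_self x)
  mul_mem' {a b} ha hb := by
    simpa [mul_smul] using smul_closure_orbit_subset_of_smul_mem H x ha ⟨_, hb, rfl⟩

variable [ContinuousConstSMul T X] [H.Normal]

theorem le_envelope : H.toSubmonoid ≤ envelope H x :=
  fun h hh => subset_closure (mem_orbit x (⟨h, hh⟩ : H))

theorem isClosed_envelope [TopologicalSpace T] [ContinuousSMul T X] :
    IsClosed (envelope H x : Set T) :=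
  isClosed_closure.preimage (continuous_id.smul continuous_const)

def envelopeSubgroup [TopologicalSpace T] [IsTopologicalGroup T] [ContinuousSMul T X]
    [CompactSpace (T ⧸ H)] : Subgroup T :=
  { envelope H x with
    inv_mem' := (envelope H x).inv_mem_of_isClosed_of_le (isClosed_envelope H x) (le_envelope H x) }

end Envelope

theorem envelope_cocompact_and_coset_flow_ap_general
    {T X : Type*} [Group T] [TopologicalSpace T] [IsTopologicalGroup T]
    [TopologicalSpace X] [MulAction T X] [ContinuousSMul T X]
    (H : Subgroup T) [H.Normal]
    (hcc : CompactSpace (T ⧸ H)) (x : X) :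
    (H : Set T) ⊆ {t : T | t • x ∈ closure (orbit H x)} ∧
    IsClosed {t : T | t • x ∈ closure (orbit H x)} ∧
    ∃ E : Subgroup T, (E : Set T) = {t : T | t • x ∈ closure (orbit H x)} ∧
      CompactSpace (T ⧸ E) ∧
      (∀ q : T ⧸ E, Dense (orbit T q)) ∧
      (∀ ε ∈ nhdsSet (Set.diagonal (T ⧸ E)), ∃ δ ∈ nhdsSet (Set.diagonal (T ⧸ E)),
        ∀ p ∈ δ, ∀ t : T, (t • Prod.fst p, t • Prod.snd p) ∈ ε) := by
  have hHE : H ≤ envelopeSubgroup H x := le_envelope H x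
  refine ⟨le_envelope H x, isClosed_envelope H x, envelopeSubgroup H x, rfl, ?_, ?_, ?_⟩
  · exact (Subgroup.quotientMapOfLE_surjective hHE).compactSpace
      (Subgroup.continuous_quotientMapOfLE hHE)
  · intro q
    rw [orbit_eq_univ]
    exact dense_univ
  · exact fun ε => exists_mem_nhdsSet_diagonal_forall_smul_mem H
      fun n hn => QuotientGroup.smul_eq_self_of_le hHE hn

/-- For `H` a normal co-compact closed subgroup of `T` and `x ∈ X`, the envelope
`E_x[H] = {t | t • x ∈ cl(H·x)}` is a co-compact closed subgroup of `T` containing `H`,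
and the left-translation flow of `T` on `T/E_x[H]` is minimal and equicontinuous
(almost periodic), where the entourages of the unique uniformity of the compact Hausdorff
space `T/E_x[H]` are the neighborhoods of the diagonal. -/
theorem envelope_cocompact_and_coset_flow_ap
    {T X : Type*} [Group T] [TopologicalSpace T] [IsTopologicalGroup T] [T2Space T]
    [TopologicalSpace X] [CompactSpace X] [T2Space X] [MulAction T X] [ContinuousSMul T X]
    (H : Subgroup T) [H.Normal] (hHclosed : IsClosed (H : Set T))
    (hcc : CompactSpace (T ⧸ H)) (x : X) :
    (H : Set T) ⊆ {t : T | t • x ∈ closure (orbit H x)} ∧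
    IsClosed {t : T | t • x ∈ closure (orbit H x)} ∧
    ∃ E : Subgroup T, (E : Set T) = {t : T | t • x ∈ closure (orbit H x)} ∧
      CompactSpace (T ⧸ E) ∧
      (∀ q : T ⧸ E, Dense (orbit T q)) ∧
      (∀ ε ∈ nhdsSet (Set.diagonal (T ⧸ E)), ∃ δ ∈ nhdsSet (Set.diagonal (T ⧸ E)),
        ∀ p ∈ δ, ∀ t : T, (t • Prod.fst p, t • Prod.snd p) ∈ ε) :=
  envelope_cocompact_and_coset_flow_ap_general H hcc x
end
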